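/- arXiv:2505.08394 — 2 statements merged into one kernel-verified Lean document; each statement's English description precedes it below -/
import Mathlib

section
/- Let G be a compact group and z: G → C∖{0} a continuous class function. The family of Ewens measures (μ^{Ewens}_{S_n(G)}) is consistent with the canonical projections: for every x_n ∈ S_n(G), the total Ewens mass of the fiber p_{n,n+1}^{-1}(x_n) ⊂ S_{n+1}(G) equals the Ewens mass of x_n; more precisely the fiber splits into the part O' where n+1 is a fixed point, contributing fraction I/(I+n) of dμ^{Ewens}_{S_n(G)}(x_n), and the part O'' where n+1 lies inside an existing cycle, contributing fraction n/(I+n), where I = ∫_G |z|² dμ_G. -/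
open scoped Classical
open MeasureTheory

noncomputable section

/-- Ordered product of `g` along the cycle of `s` containing `i`. -/
def cycleProd {M : Type*} [Monoid M] {n : ℕ} (s : Equiv.Perm (Fin n)) (g : Fin n → M)
    (i : Fin n) : M :=
  (((List.range (Function.minimalPeriod s i)).map (fun k => g ((s ^ k) i))).reverse).prod

/-- Canonical representatives (minimal elements) of the cycles of `s`. -/
def cycleReps {n : ℕ} (s : Equiv.Perm (Fin n)) : Finset (Fin n) :=
  Finset.univ.filter (fun i => ∀ j, s.SameCycle i j → i ≤ j)

/-- Extension of a permutation of `{1,…,n}` to `{1,…,n+1}` fixing the last letter. -/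
def extPerm {n : ℕ} (s : Equiv.Perm (Fin n)) : Equiv.Perm (Fin (n + 1)) :=
  finSuccEquivLast.symm.permCongr s.optionCongr

/-- The density of the Ewens measure on `S_m(G)` with respect to the product of the
normalized Haar measure on `G^m` and the uniform measure on `S_m`:
`m! ∏_{cycles} |z(cycle product)|² / (I)_m` with `I = ∫_G |z|² dμ`. -/
def ewensDensity {G : Type*} [Group G] [MeasurableSpace G] (μ : Measure G) (z : G → ℂ)
    (m : ℕ) (g : Fin m → G) (s : Equiv.Perm (Fin m)) : ℝ :=
  ((m.factorial : ℝ) * ∏ i ∈ cycleReps s, ‖z (cycleProd s g i)‖ ^ 2) /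
    (ascPochhammer ℝ m).eval (∫ x, ‖z x‖ ^ 2 ∂μ)

namespace EwensAux
open Equiv
def revProd {M : Type*} [Monoid M] (f : ℕ → M) (N : ℕ) : M :=
  (((List.range N).map f).reverse).prod

lemma revProd_succ {M : Type*} [Monoid M] (f : ℕ → M) (N : ℕ) :
    revProd f (N + 1) = f N * revProd f N := by
  simp [revProd, List.range_succ]

lemma revProd_one {M : Type*} [Monoid M] (f : ℕ → M) : revProd f 1 = f 0 := by
  simp [revProd, List.range_succ]

lemma revProd_add {M : Type*} [Monoid M] (f : ℕ → M) (A B : ℕ) :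
    revProd f (A + B) = revProd (fun d => f (A + d)) B * revProd f A := by
  simp [revProd, List.range_add, List.reverse_append]
  rfl

lemma revProd_congr {M : Type*} [Monoid M] {f g : ℕ → M} {N : ℕ}
    (h : ∀ k < N, f k = g k) : revProd f N = revProd g N := by
  unfold revProd
  congr 1
  congr 1
  exact List.map_congr_left fun k hk => h k (List.mem_range.mp hk)

lemma perm_minPeriod_pos {N : ℕ} (f : Perm (Fin N)) (x : Fin N) :
    0 < Function.minimalPeriod f x := by
  apply Function.minimalPeriod_pos_of_mem_periodicPts
  exact ⟨orderOf f, orderOf_pos f, by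
    simp [Function.IsPeriodicPt, Function.IsFixedPt, Perm.iterate_eq_pow, pow_orderOf_eq_one]⟩

lemma pow_minPeriod_self {N : ℕ} (f : Perm (Fin N)) (x : Fin N) :
    (f ^ Function.minimalPeriod (⇑f) x) x = x := by
  have := Function.isPeriodicPt_minimalPeriod (⇑f) x
  rwa [Function.IsPeriodicPt, Function.IsFixedPt, Perm.iterate_eq_pow] at this

lemma pow_ne_self_of_lt {N : ℕ} (f : Perm (Fin N)) (x : Fin N) {k : ℕ} (hk : 0 < k)
    (hk2 : k < Function.minimalPeriod (⇑f) x) : (f ^ k) x ≠ x := by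
  intro h
  have : Function.IsPeriodicPt (⇑f) k x := by
    rw [Function.IsPeriodicPt, Function.IsFixedPt, Perm.iterate_eq_pow]; exact h
  exact absurd (this.minimalPeriod_le hk) (by omega)

lemma minPeriod_eq {N : ℕ} (f : Perm (Fin N)) (x : Fin N) (M : ℕ) (hM : 0 < M)
    (h1 : (f ^ M) x = x) (h2 : ∀ k, 0 < k → k < M → (f ^ k) x ≠ x) :
    Function.minimalPeriod (⇑f) x = M := by
  have hp : Function.IsPeriodicPt (⇑f) M x := by
    rw [Function.IsPeriodicPt, Function.IsFixedPt, Perm.iterate_eq_pow]; exact h1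
  have hle := hp.minimalPeriod_le hM
  have hpos := perm_minPeriod_pos f x
  rcases lt_or_eq_of_le hle with hlt | he
  · exact absurd (pow_minPeriod_self f x) (h2 _ hpos hlt)
  · exact he

lemma sameCycle_iff_pow {N : ℕ} (f : Perm (Fin N)) (x y : Fin N) :
    f.SameCycle x y ↔ ∃ k : ℕ, (f ^ k) x = y := by
  constructor
  · intro h
    obtain ⟨i, _, _, hi⟩ := h.exists_pow_eq f
    exact ⟨i, hi⟩
  · rintro ⟨k, hk⟩
    exact ⟨(k : ℤ), by simpa [zpow_natCast] using hk⟩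


variable {n : ℕ}

lemma cycleProd_eq_revProd {M : Type*} [Monoid M] (s : Perm (Fin n)) (g : Fin n → M) (i : Fin n) :
    cycleProd s g i = revProd (fun k => g ((s ^ k) i)) (Function.minimalPeriod (⇑s) i) := rfl

lemma extPerm_castSucc (s : Perm (Fin n)) (i : Fin n) :
    extPerm s i.castSucc = (s i).castSucc := by
  simp [extPerm, Equiv.permCongr_apply]

lemma extPerm_last (s : Perm (Fin n)) : extPerm s (Fin.last n) = Fin.last n := by
  simp [extPerm, Equiv.permCongr_apply]

lemma extPerm_pow_castSucc (s : Perm (Fin n)) (k : ℕ) (i : Fin n) :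
    ((extPerm s) ^ k) i.castSucc = ((s ^ k) i).castSucc := by
  induction k with
  | zero => simp
  | succ k ih => simp [pow_succ', Perm.mul_apply, ih, extPerm_castSucc]

lemma extPerm_pow_last (s : Perm (Fin n)) (k : ℕ) :
    ((extPerm s) ^ k) (Fin.last n) = Fin.last n := by
  induction k with
  | zero => simp
  | succ k ih => simp [pow_succ', Perm.mul_apply, ih, extPerm_last]

lemma minPeriod_ext (s : Perm (Fin n)) (i : Fin n) :
    Function.minimalPeriod (⇑(extPerm s)) i.castSucc = Function.minimalPeriod (⇑s) i := by
  apply minPeriod_eq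
  · exact perm_minPeriod_pos s i
  · rw [extPerm_pow_castSucc, pow_minPeriod_self]
  · intro k hk hk2 h
    rw [extPerm_pow_castSucc] at h
    exact pow_ne_self_of_lt s i hk hk2 (Fin.castSucc_injective n h)

lemma minPeriod_ext_last (s : Perm (Fin n)) :
    Function.minimalPeriod (⇑(extPerm s)) (Fin.last n) = 1 := by
  apply minPeriod_eq _ _ 1 one_pos
  · simpa using extPerm_last s
  · intro k hk hk2; omega

lemma sameCycle_ext_iff (s : Perm (Fin n)) (i i' : Fin n) :
    (extPerm s).SameCycle i.castSucc i'.castSucc ↔ s.SameCycle i i' := by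
  rw [sameCycle_iff_pow, sameCycle_iff_pow]
  constructor
  · rintro ⟨k, hk⟩
    exact ⟨k, Fin.castSucc_injective n (by rw [← extPerm_pow_castSucc]; exact hk)⟩
  · rintro ⟨k, hk⟩
    exact ⟨k, by rw [extPerm_pow_castSucc, hk]⟩

lemma cycleReps_ext (s : Perm (Fin n)) :
    cycleReps (extPerm s) = insert (Fin.last n) ((cycleReps s).image Fin.castSucc) := by
  ext x
  simp only [cycleReps, Finset.mem_filter, Finset.mem_univ, true_and, Finset.mem_insert,
    Finset.mem_image]
  rcases Fin.eq_castSucc_or_eq_last x with ⟨i, rfl⟩ | rfl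
  · constructor
    · intro hx
      refine Or.inr ⟨i, fun i' hii' => ?_, rfl⟩
      exact Fin.castSucc_le_castSucc_iff.mp (hx i'.castSucc ((sameCycle_ext_iff s i i').mpr hii'))
    · rintro (h | ⟨i', hi', hii⟩)
      · exact absurd h (Fin.castSucc_lt_last i).ne
      · obtain rfl : i' = i := Fin.castSucc_injective n hii
        intro y hy
        rcases Fin.eq_castSucc_or_eq_last y with ⟨y', rfl⟩ | rfl
        · exact Fin.castSucc_le_castSucc_iff.mpr (hi' y' ((sameCycle_ext_iff s i' y').mp hy))
        · exact Fin.le_last _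
  · refine ⟨fun _ => Or.inl rfl, fun _ y hy => ?_⟩
    obtain ⟨k, hk⟩ := (sameCycle_iff_pow _ _ _).mp hy
    rw [extPerm_pow_last] at hk
    exact hk ▸ le_refl _

lemma cycleProd_ext {M : Type*} [Monoid M] (s : Perm (Fin n)) (g : Fin n → M) (h : M) (i : Fin n) :
    cycleProd (extPerm s) (Fin.snoc g h) i.castSucc = cycleProd s g i := by
  rw [cycleProd_eq_revProd, cycleProd_eq_revProd, minPeriod_ext]
  exact revProd_congr fun k _ => by rw [extPerm_pow_castSucc, Fin.snoc_castSucc]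

lemma cycleProd_ext_last {M : Type*} [Monoid M] (s : Perm (Fin n)) (g : Fin n → M) (h : M) :
    cycleProd (extPerm s) (Fin.snoc g h) (Fin.last n) = h := by
  rw [cycleProd_eq_revProd, minPeriod_ext_last, revProd_one]
  simp


lemma revProd_split {M : Type*} [Monoid M] (f : ℕ → M) (A B : ℕ) :
    revProd f (A + 1 + 1 + B)
      = revProd (fun d => f (A + 1 + 1 + d)) B * (f (A + 1) * (f A * revProd f A)) := by
  rw [revProd_add, revProd_succ, revProd_succ]

lemma revProd_split2 {M : Type*} [Monoid M] (f : ℕ → M) (A B : ℕ) :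
    revProd f (A + 1 + B) = revProd (fun d => f (A + 1 + d)) B * (f A * revProd f A) := by
  rw [revProd_add, revProd_succ]

lemma revProd_split3 {M : Type*} [Monoid M] (f : ℕ → M) (A : ℕ) :
    revProd f (1 + A) = revProd (fun d => f (1 + d)) A * f 0 := by
  rw [revProd_add, revProd_one]

def insPerm (s : Perm (Fin n)) (j : Fin n) : Perm (Fin (n + 1)) :=
  Equiv.swap j.castSucc (Fin.last n) * extPerm s

lemma insPerm_castSucc (s : Perm (Fin n)) (j i : Fin n) :
    insPerm s j i.castSucc = if s i = j then Fin.last n else (s i).castSucc := by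
  rw [insPerm, Perm.mul_apply, extPerm_castSucc]
  by_cases h : s i = j
  · rw [if_pos h, h, Equiv.swap_apply_left]
  · rw [if_neg h, Equiv.swap_apply_of_ne_of_ne
      (fun hh => h (Fin.castSucc_injective n hh)) (Fin.castSucc_lt_last _).ne]

lemma insPerm_last (s : Perm (Fin n)) (j : Fin n) :
    insPerm s j (Fin.last n) = j.castSucc := by
  rw [insPerm, Perm.mul_apply, extPerm_last, Equiv.swap_apply_right]

def projFin (j : Fin n) : Fin (n + 1) → Fin n := Fin.lastCases j (fun i => i)

lemma projFin_castSucc (j i : Fin n) : projFin j i.castSucc = i := by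
  simp [projFin]

lemma projFin_last (j : Fin n) : projFin j (Fin.last n) = j := by
  simp [projFin]

lemma sameCycle_projFin_step (s : Perm (Fin n)) (j : Fin n) (y : Fin (n + 1)) :
    s.SameCycle (projFin j y) (projFin j (insPerm s j y)) := by
  rcases Fin.eq_castSucc_or_eq_last y with ⟨x, rfl⟩ | rfl
  · rw [insPerm_castSucc, projFin_castSucc]
    by_cases h : s x = j
    · rw [if_pos h, projFin_last, ← h]; exact ⟨1, by simp⟩
    · rw [if_neg h, projFin_castSucc]; exact ⟨1, by simp⟩
  · rw [insPerm_last, projFin_last, projFin_castSucc]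

lemma sameCycle_projFin_pow (s : Perm (Fin n)) (j : Fin n) (k : ℕ) (y : Fin (n + 1)) :
    s.SameCycle (projFin j y) (projFin j (((insPerm s j) ^ k) y)) := by
  induction k generalizing y with
  | zero => simpa using Perm.SameCycle.refl s (projFin j y)
  | succ k ih =>
      rw [pow_succ, Perm.mul_apply]
      exact (sameCycle_projFin_step s j y).trans (ih (insPerm s j y))

lemma sameCycle_ins_iff (s : Perm (Fin n)) (j i i' : Fin n) :
    (insPerm s j).SameCycle i.castSucc i'.castSucc ↔ s.SameCycle i i' := by
  constructor
  · intro hy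
    obtain ⟨k, hk⟩ := (sameCycle_iff_pow _ _ _).mp hy
    have := sameCycle_projFin_pow s j k i.castSucc
    rwa [hk, projFin_castSucc, projFin_castSucc] at this
  · intro hy
    obtain ⟨k, hk⟩ := (sameCycle_iff_pow s i i').mp hy
    rw [← hk]
    clear hk hy
    induction k with
    | zero => simpa using Perm.SameCycle.refl _ _
    | succ k ih =>
        rw [pow_succ', Perm.mul_apply]
        refine ih.trans ?_
        rw [sameCycle_iff_pow]
        by_cases h : s ((s ^ k) i) = j
        · exact ⟨2, by rw [pow_succ, pow_one, Perm.mul_apply, insPerm_castSucc, if_pos h,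
            insPerm_last, h]⟩
        · exact ⟨1, by rw [pow_one, insPerm_castSucc, if_neg h]⟩

lemma cycleReps_ins (s : Perm (Fin n)) (j : Fin n) :
    cycleReps (insPerm s j) = (cycleReps s).image Fin.castSucc := by
  ext x
  simp only [cycleReps, Finset.mem_filter, Finset.mem_univ, true_and, Finset.mem_image]
  rcases Fin.eq_castSucc_or_eq_last x with ⟨i, rfl⟩ | rfl
  · constructor
    · intro hx
      refine ⟨i, fun i' hii' => ?_, rfl⟩
      exact Fin.castSucc_le_castSucc_iff.mp (hx i'.castSucc ((sameCycle_ins_iff s j i i').mpr hii'))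
    · rintro ⟨i', hi', hii⟩
      rw [← hii]
      intro y hy
      rcases Fin.eq_castSucc_or_eq_last y with ⟨y', rfl⟩ | rfl
      · exact Fin.castSucc_le_castSucc_iff.mpr (hi' y' ((sameCycle_ins_iff s j i' y').mp hy))
      · exact Fin.le_last _
  · constructor
    · intro hx
      have h1 : (insPerm s j).SameCycle (Fin.last n) j.castSucc :=
        (sameCycle_iff_pow _ _ _).mpr ⟨1, by rw [pow_one, insPerm_last]⟩
      exact absurd (hx _ h1) (not_le.mpr (Fin.castSucc_lt_last j))
    · rintro ⟨i', _, hii⟩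
      exact absurd hii (Fin.castSucc_lt_last i').ne

variable {G : Type*} [Group G]

lemma insFun_last (g : Fin n → G) (h : G) (j : Fin n) :
    Function.update (Fin.snoc g h : Fin (n+1) → G) j.castSucc (g j * h⁻¹) (Fin.last n) = h := by
  rw [Function.update_of_ne (Fin.castSucc_lt_last j).ne', Fin.snoc_last]

lemma insFun_castSucc (g : Fin n → G) (h : G) (j : Fin n) {x : Fin n} (hx : x ≠ j) :
    Function.update (Fin.snoc g h : Fin (n+1) → G) j.castSucc (g j * h⁻¹) x.castSucc = g x := by
  rw [Function.update_of_ne (fun hh => hx (Fin.castSucc_injective n hh)), Fin.snoc_castSucc]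

lemma insFun_self (g : Fin n → G) (h : G) (j : Fin n) :
    Function.update (Fin.snoc g h : Fin (n+1) → G) j.castSucc (g j * h⁻¹) j.castSucc = g j * h⁻¹ :=
  Function.update_self _ _ _


lemma key_prod (s : Perm (Fin n)) (j r : Fin n) (g : Fin n → G) (h : G) :
    ∃ c : G, cycleProd (insPerm s j)
        (Function.update (Fin.snoc g h : Fin (n+1) → G) j.castSucc (g j * h⁻¹)) r.castSucc
      = c * cycleProd s g r * c⁻¹ := by
  set u := insPerm s j with hu
  set g' : Fin (n + 1) → G :=
    Function.update (Fin.snoc g h : Fin (n+1) → G) j.castSucc (g j * h⁻¹) with hg'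
  obtain ⟨m, hm⟩ : ∃ m, Function.minimalPeriod (⇑s) r = m := ⟨_, rfl⟩
  have hm0 : 0 < m := hm ▸ perm_minPeriod_pos s r
  have hsm : (s ^ m) r = r := by rw [← hm]; exact pow_minPeriod_self s r
  have hne_small : ∀ k, 0 < k → k < m → (s ^ k) r ≠ r := fun k h1 h2 =>
    pow_ne_self_of_lt s r h1 (hm ▸ h2)
  by_cases hc : s.SameCycle r j
  case neg =>
    have hnj : ∀ k : ℕ, (s ^ k) r ≠ j := fun k hk => hc ((sameCycle_iff_pow s r j).mpr ⟨k, hk⟩)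
    have traj : ∀ k : ℕ, (u ^ k) r.castSucc = ((s ^ k) r).castSucc := by
      intro k
      induction k with
      | zero => simp
      | succ k ih =>
          have hne : s ((s ^ k) r) ≠ j := by
            rw [← Perm.mul_apply, ← pow_succ']; exact hnj (k + 1)
          rw [pow_succ', Perm.mul_apply, ih, hu, insPerm_castSucc, if_neg hne,
            ← Perm.mul_apply, ← pow_succ']
    have hper : Function.minimalPeriod (⇑u) r.castSucc = m := by
      apply minPeriod_eq _ _ _ hm0
      · rw [traj, hsm]
      · intro k hk hk2 hh
        rw [traj] at hh
        exact hne_small k hk hk2 (Fin.castSucc_injective n hh)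
    refine ⟨1, ?_⟩
    rw [one_mul, inv_one, mul_one, cycleProd_eq_revProd, cycleProd_eq_revProd, hper, hm]
    apply revProd_congr
    intro k _
    show g' ((u ^ k) r.castSucc) = g ((s ^ k) r)
    rw [traj, hg']
    exact insFun_castSucc g h j (hnj k)
  case pos =>
    obtain ⟨b, hb⟩ := (sameCycle_iff_pow s r j).mp hc
    have hex : ∃ k : ℕ, (s ^ (k + 1)) r = j := by
      rcases Nat.eq_zero_or_pos b with rfl | hbpos
      · exact ⟨m - 1, by rw [show m - 1 + 1 = m by omega, hsm]; simpa using hb⟩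
      · exact ⟨b - 1, by rwa [show b - 1 + 1 = b by omega]⟩
    obtain ⟨a, ha'⟩ : ∃ a, Nat.find hex = a := ⟨_, rfl⟩
    have ha : (s ^ (a + 1)) r = j := ha' ▸ Nat.find_spec hex
    have hamin : ∀ k < a, (s ^ (k + 1)) r ≠ j := fun k hk => Nat.find_min hex (ha' ▸ hk)
    have ham : a + 1 ≤ m := by
      by_cases hrj : r = j
      · have hp : (s ^ (m - 1 + 1)) r = j := by
          rw [show m - 1 + 1 = m by omega, hsm]; exact hrj
        have := ha' ▸ Nat.find_le hp
        omega
      · have hmod : (s ^ (b % m)) r = j := by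
          have h2 := Function.iterate_mod_minimalPeriod_eq (f := ⇑s) (x := r) (n := b)
          rw [Perm.iterate_eq_pow, Perm.iterate_eq_pow, hm] at h2
          rw [h2, hb]
        have hbm0 : b % m ≠ 0 := by
          intro h0; rw [h0] at hmod; exact hrj (by simpa using hmod)
        have hblt : b % m < m := Nat.mod_lt b hm0
        have hp : (s ^ (b % m - 1 + 1)) r = j := by
          rw [show b % m - 1 + 1 = b % m by omega]; exact hmod
        have := ha' ▸ Nat.find_le hp
        omega
    have hU : ∀ k, 0 < k → k ≤ m → (s ^ k) r = j → k = a + 1 := by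
      intro k hk0 hkm hkj
      have hk1 : a + 1 ≤ k := by
        by_contra hlt
        exact hamin (k - 1) (by omega) (by rwa [show k - 1 + 1 = k by omega])
      by_contra hne
      have h1 : (s ^ (a + 1)) ((s ^ (k - (a + 1))) r) = (s ^ (a + 1)) r := by
        rw [← Perm.mul_apply, ← pow_add, show a + 1 + (k - (a + 1)) = k by omega, hkj, ha]
      exact hne_small (k - (a + 1)) (by omega) (by omega) ((s ^ (a + 1)).injective h1)
    have T1 : ∀ k ≤ a, (u ^ k) r.castSucc = ((s ^ k) r).castSucc := by
      intro k hk
      induction k with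
      | zero => simp
      | succ k ih =>
          have hne : s ((s ^ k) r) ≠ j := by
            rw [← Perm.mul_apply, ← pow_succ']; exact hamin k (by omega)
          rw [pow_succ', Perm.mul_apply, ih (by omega), hu, insPerm_castSucc, if_neg hne,
            ← Perm.mul_apply, ← pow_succ']
    have T2 : (u ^ (a + 1)) r.castSucc = Fin.last n := by
      have hpos : s ((s ^ a) r) = j := by
        rw [← Perm.mul_apply, ← pow_succ']; exact ha
      rw [pow_succ', Perm.mul_apply, T1 a le_rfl, hu, insPerm_castSucc, if_pos hpos]
    have T3 : ∀ k, a + 1 < k → k ≤ m + 1 → (u ^ k) r.castSucc = ((s ^ (k - 1)) r).castSucc := by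
      have T3' : ∀ d, a + 2 + d ≤ m + 1 →
          (u ^ (a + 2 + d)) r.castSucc = ((s ^ (a + 1 + d)) r).castSucc := by
        intro d
        induction d with
        | zero =>
            intro _
            rw [show a + 2 + 0 = (a + 1) + 1 by omega, pow_succ', Perm.mul_apply, T2, hu,
              insPerm_last, show a + 1 + 0 = a + 1 by omega, ha]
        | succ d ih =>
            intro hd
            have hne : s ((s ^ (a + 1 + d)) r) ≠ j := by
              rw [← Perm.mul_apply, ← pow_succ']
              intro hj
              have := hU (a + 1 + d + 1) (by omega) (by omega) hj
              omega
            rw [show a + 2 + (d + 1) = (a + 2 + d) + 1 by omega, pow_succ', Perm.mul_apply,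
              ih (by omega), hu, insPerm_castSucc, if_neg hne, ← Perm.mul_apply, ← pow_succ',
              show a + 1 + d + 1 = a + 1 + (d + 1) by omega]
      intro k hk1 hk2
      have := T3' (k - (a + 2)) (by omega)
      rw [show a + 2 + (k - (a + 2)) = k by omega, show a + 1 + (k - (a + 2)) = k - 1 by omega]
        at this
      exact this
    have Tper : Function.minimalPeriod (⇑u) r.castSucc = m + 1 := by
      apply minPeriod_eq _ _ _ (by omega)
      · rw [T3 (m + 1) (by omega) le_rfl, show m + 1 - 1 = m by omega, hsm]
      · intro k hk0 hkm1
        rcases lt_trichotomy k (a + 1) with hka | hka | hka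
        · rw [T1 k (by omega)]
          intro hh
          exact hne_small k hk0 (by omega) (Fin.castSucc_injective n hh)
        · rw [hka, T2]
          exact (Fin.castSucc_lt_last r).ne'
        · rw [T3 k hka (by omega)]
          intro hh
          exact hne_small (k - 1) (by omega) (by omega) (Fin.castSucc_injective n hh)
    have hQ : cycleProd s g r = revProd (fun k => g ((s ^ k) r)) m := by
      rw [cycleProd_eq_revProd, hm]
    have hF : cycleProd u g' r.castSucc = revProd (fun k => g' ((u ^ k) r.castSucc)) (m + 1) := by
      rw [cycleProd_eq_revProd, Tper]
    by_cases hrj : r = j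
    · -- n+1 is inserted into the cycle at its minimal element
      have hm_eq : m = a + 1 := hU m hm0 le_rfl (by rw [hsm]; exact hrj)
      subst hm_eq
      refine ⟨h, ?_⟩
      rw [hF, hQ, revProd_succ]
      have E2 : g' ((u ^ (a + 1)) r.castSucc) = h := by
        rw [T2, hg']; exact insFun_last g h j
      have E5 : revProd (fun k => g' ((u ^ k) r.castSucc)) (a + 1)
          = revProd (fun k => g ((s ^ k) r)) (a + 1) * h⁻¹ := by
        rw [show a + 1 = 1 + a by omega, revProd_split3, revProd_split3]
        have E5c : revProd (fun d => g' ((u ^ (1 + d)) r.castSucc)) a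
            = revProd (fun d => g ((s ^ (1 + d)) r)) a := by
          apply revProd_congr
          intro d hd
          have hne : (s ^ (1 + d)) r ≠ j := by
            intro hj
            have := hU (1 + d) (by omega) (by omega) hj
            omega
          rw [T1 (1 + d) (by omega), hg']
          exact insFun_castSucc g h j hne
        have E5b : g' ((u ^ 0) r.castSucc) = g ((s ^ 0) r) * h⁻¹ := by
          simp only [pow_zero, Equiv.Perm.coe_one, id_eq, hrj, hg']
          exact insFun_self g h j
        simp only [E5c, E5b]
        rw [mul_assoc]
      simp only [E2, E5]
      group
    · -- n+1 is inserted into the cycle elsewhere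
      have hlt : a + 1 < m := by
        rcases lt_or_eq_of_le ham with h' | h'
        · exact h'
        · rw [h', hsm] at ha
          exact absurd ha hrj
      obtain ⟨B, rfl⟩ : ∃ B, m = a + 1 + 1 + B := ⟨m - (a + 2), by omega⟩
      refine ⟨1, ?_⟩
      rw [one_mul, inv_one, mul_one, hF, hQ,
        show a + 1 + 1 + B + 1 = a + 1 + 1 + 1 + B by omega, revProd_split (A := a + 1),
        revProd_split2 (A := a + 1)]
      have E1 : revProd (fun k => g' ((u ^ k) r.castSucc)) (a + 1)
          = revProd (fun k => g ((s ^ k) r)) (a + 1) := by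
        apply revProd_congr
        intro k hk
        have hne : (s ^ k) r ≠ j := by
          intro hj
          rcases Nat.eq_zero_or_pos k with rfl | hk0
          · exact hrj (by simpa using hj)
          · have := hU k hk0 (by omega) hj
            omega
        rw [T1 k (by omega), hg']
        exact insFun_castSucc g h j hne
      have E2 : g' ((u ^ (a + 1)) r.castSucc) = h := by
        rw [T2, hg']; exact insFun_last g h j
      have E3 : g' ((u ^ (a + 1 + 1)) r.castSucc) = g ((s ^ (a + 1)) r) * h⁻¹ := by
        rw [T3 (a + 1 + 1) (by omega) (by omega), show a + 1 + 1 - 1 = a + 1 by omega, ha, hg']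
        exact insFun_self g h j
      have E4 : revProd (fun d => g' ((u ^ (a + 1 + 1 + 1 + d)) r.castSucc)) B
          = revProd (fun d => g ((s ^ (a + 1 + 1 + d)) r)) B := by
        apply revProd_congr
        intro d hd
        have hne : (s ^ (a + 1 + 1 + d)) r ≠ j := by
          intro hj
          have := hU (a + 1 + 1 + d) (by omega) (by omega) hj
          omega
        rw [T3 (a + 1 + 1 + 1 + d) (by omega) (by omega),
          show a + 1 + 1 + 1 + d - 1 = a + 1 + 1 + d by omega, hg']
        exact insFun_castSucc g h j hne
      simp only [E1, E2, E3, E4]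
      group

lemma arith1 (f f' A P c x : ℝ) (hf : f ≠ 0) (hf' : f' ≠ 0) :
    (1 / f') * (x * ((f' * A) / (P * c))) = (x / c) * ((1 / f) * ((f * A) / P)) := by
  rw [mul_div_assoc, mul_div_assoc]
  calc (1 / f') * (x * (f' * (A / (P * c))))
      = ((1 / f') * f') * (x * (A / (P * c))) := by ring
    _ = x * (A / (P * c)) := by rw [one_div_mul_cancel hf', one_mul]
    _ = ((1 / f) * f) * ((x / c) * (A / P)) := by
        rw [one_div_mul_cancel hf, one_mul, div_mul_div_comm, mul_comm c P, mul_div_assoc]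
    _ = (x / c) * ((1 / f) * (f * (A / P))) := by ring

end EwensAux

open EwensAux

/-- Consistency of the Ewens measures on the wreath products `S_n(G)` with the canonical
projections `p_{n,n+1}`: for a fixed `x_n = (g,s) ∈ S_n(G)`, the fiber over `x_n` splits
into the part `O'` where `n+1` is a fixed point (elements `((g,h), s·(n+1))`, `h ∈ G`),
contributing the fraction `I/(I+n)` of the Ewens mass of `x_n`, and the part `O''`
where `n+1` lies inside an existing cycle (elements indexed by the `n` insertion
positions `j` and `h = g_{n+1} ∈ G`), contributing the fraction `n/(I+n)`, where
`I = ∫_G |z|² dμ`. -/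


theorem ewens_consistency (G : Type*) [Group G] [TopologicalSpace G]
    [IsTopologicalGroup G] [CompactSpace G] [MeasurableSpace G] [BorelSpace G]
    (μ : Measure G) [μ.IsHaarMeasure] [IsProbabilityMeasure μ]
    (z : G → ℂ) (hz : Continuous z) (hz0 : ∀ x, z x ≠ 0)
    (hcentral : ∀ a b : G, z (a * b * a⁻¹) = z b)
    (n : ℕ) (g : Fin n → G) (s : Equiv.Perm (Fin n)) (I : ℝ)
    (hI : I = ∫ x, ‖z x‖ ^ 2 ∂μ) :
    ((1 / ((n + 1).factorial : ℝ)) *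
          ∫ h : G, ewensDensity μ z (n + 1) (Fin.snoc g h) (extPerm s) ∂μ
        = (I / (I + n)) * ((1 / (n.factorial : ℝ)) * ewensDensity μ z n g s)) ∧
    ((1 / ((n + 1).factorial : ℝ)) *
          ∑ j : Fin n,
            ∫ h : G,
              ewensDensity μ z (n + 1)
                (Function.update (Fin.snoc g h) (Fin.castSucc j) (g j * h⁻¹))
                (Equiv.swap (Fin.castSucc j) (Fin.last n) * extPerm s) ∂μ
        = ((n : ℝ) / (I + n)) * ((1 / (n.factorial : ℝ)) * ewensDensity μ z n g s)) := by
  constructor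
  · -- the fixed-point part O'
    have hnm : Fin.last n ∉ (cycleReps s).image Fin.castSucc := by
      simp only [Finset.mem_image]
      rintro ⟨i, _, hi⟩
      exact (Fin.castSucc_lt_last i).ne hi
    have hpt : ∀ h : G, ewensDensity μ z (n + 1) (Fin.snoc g h) (extPerm s)
        = (((n + 1).factorial : ℝ) * ∏ i ∈ cycleReps s, ‖z (cycleProd s g i)‖ ^ 2) /
            ((ascPochhammer ℝ n).eval I * (I + n)) * ‖z h‖ ^ 2 := by
      intro h
      have hprod : ∀ i ∈ cycleReps s,
          ‖z (cycleProd (extPerm s) (Fin.snoc g h) i.castSucc)‖ ^ 2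
            = ‖z (cycleProd s g i)‖ ^ 2 := fun i _ => by rw [cycleProd_ext]
      simp only [ewensDensity]
      rw [cycleReps_ext, Finset.prod_insert hnm,
        Finset.prod_image (fun x _ y _ hxy => Fin.castSucc_injective n hxy),
        Finset.prod_congr rfl hprod, cycleProd_ext_last, ← hI, ascPochhammer_succ_right]
      simp only [Polynomial.eval_mul, Polynomial.eval_add, Polynomial.eval_X,
        Polynomial.eval_natCast]
      ring
    have hint : (∫ h : G, ewensDensity μ z (n + 1) (Fin.snoc g h) (extPerm s) ∂μ)
        = I * ((((n + 1).factorial : ℝ) * ∏ i ∈ cycleReps s, ‖z (cycleProd s g i)‖ ^ 2) /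
            ((ascPochhammer ℝ n).eval I * (I + n))) := by
      simp_rw [hpt]
      rw [MeasureTheory.integral_const_mul, ← hI, mul_comm]
    rw [hint]
    simp only [ewensDensity]
    rw [← hI]
    exact arith1 _ _ _ _ _ _ (Nat.cast_ne_zero.mpr n.factorial_ne_zero)
      (Nat.cast_ne_zero.mpr (n + 1).factorial_ne_zero)
  · -- the insertion part O''
    have hrw : ∀ j : Fin n, Equiv.swap (Fin.castSucc j) (Fin.last n) * extPerm s = insPerm s j :=
      fun j => rfl
    have hpt : ∀ (j : Fin n) (h : G),
        ewensDensity μ z (n + 1)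
          (Function.update (Fin.snoc g h) (Fin.castSucc j) (g j * h⁻¹)) (insPerm s j)
        = (((n + 1).factorial : ℝ) * ∏ i ∈ cycleReps s, ‖z (cycleProd s g i)‖ ^ 2) /
            ((ascPochhammer ℝ n).eval I * (I + n)) := by
      intro j h
      have hprod : ∀ i ∈ cycleReps s,
          ‖z (cycleProd (insPerm s j)
            (Function.update (Fin.snoc g h) (Fin.castSucc j) (g j * h⁻¹)) i.castSucc)‖ ^ 2
          = ‖z (cycleProd s g i)‖ ^ 2 := by
        intro i _
        obtain ⟨c, hc⟩ := key_prod s j i g h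
        rw [hc, hcentral]
      simp only [ewensDensity]
      rw [cycleReps_ins, Finset.prod_image (fun x _ y _ hxy => Fin.castSucc_injective n hxy),
        Finset.prod_congr rfl hprod, ← hI, ascPochhammer_succ_right]
      simp only [Polynomial.eval_mul, Polynomial.eval_add, Polynomial.eval_X,
        Polynomial.eval_natCast]
    simp only [hrw]
    simp only [hpt, MeasureTheory.integral_const, measure_univ, probReal_univ, ENNReal.toReal_one, one_smul,
      Finset.sum_const, Finset.card_univ, Fintype.card_fin, nsmul_eq_mul]
    simp only [ewensDensity]
    rw [← hI]
    exact arith1 _ _ _ _ _ _ (Nat.cast_ne_zero.mpr n.factorial_ne_zero)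
      (Nat.cast_ne_zero.mpr (n + 1).factorial_ne_zero)

end
end

section
/- The fundamental cocycle satisfies the cocycle identity: for the action of S_∞(G) × S_∞(G) on the projective limit space of G-virtual permutations, and for each conjugacy class c of G, the function C_c(x, W) = [p_n(xW)](c) − [p_n(x)](c) (with n large enough that W ∈ S_n(G) × S_n(G)) is well defined independently of n, and satisfies C_c(x, W_2 W_1) = C_c(x W_2, W_1) + C_c(x, W_2) for all x and all W_1, W_2 ∈ S_∞(G) × S_∞(G). -/
open scoped Classical

noncomputable section

/-- Elements of the wreath product `S_m(G) = G^m ⋊ S_m`. -/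
def El (G : Type*) (m : ℕ) : Type _ := (Fin m → G) × Equiv.Perm (Fin m)

/-- Multiplication in `S_m(G)`: `(g,s)(h,t) = (g · s(h), st)`. -/
def wmul {G : Type*} [Group G] {m : ℕ} (x y : El G m) : El G m :=
  (fun i => x.1 i * y.1 (x.2⁻¹ i), x.2 * y.2)

/-- Inversion in `S_m(G)`. -/
def winv {G : Type*} [Group G] {m : ℕ} (x : El G m) : El G m :=
  (fun i => (x.1 (x.2 i))⁻¹, x.2⁻¹)

/-- Number of cycles of `x ∈ S_m(G)` of color `c` (the color of a cycle being the
conjugacy class of its cycle product). -/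
def countColor {G : Type*} [Group G] {m : ℕ} (c : ConjClasses G) (x : El G m) : ℕ :=
  Multiset.count c ((cycleReps x.2).val.map fun i => ConjClasses.mk (cycleProd x.2 x.1 i))

/-- Permutation part of the canonical projection `S_{m+1}(G) → S_m(G)`. -/
def projPerm {n : ℕ} (s : Equiv.Perm (Fin (n + 1))) : Equiv.Perm (Fin n) :=
  Equiv.removeNone (finSuccEquivLast.permCongr s)

/-- `G^m`-part of the canonical projection `S_{m+1}(G) → S_m(G)`. -/
def projG {G : Type*} [Group G] {n : ℕ} (g : Fin (n + 1) → G) (s : Equiv.Perm (Fin (n + 1)))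
    (i : Fin n) : G :=
  if Fin.castSucc i = s (Fin.last n) then g (Fin.castSucc i) * g (Fin.last n)
  else g (Fin.castSucc i)

/-- The canonical projection `p_{m,m+1} : S_{m+1}(G) → S_m(G)`. -/
def projEl {G : Type*} [Group G] {m : ℕ} (x : El G (m + 1)) : El G m :=
  (projG x.1 x.2, projPerm x.2)

/-- The space of `G`-virtual permutations: the projective limit of the `S_m(G)` under
the canonical projections. -/
def VirtualPerm (G : Type*) [Group G] : Type _ :=
  {x : ∀ m, El G m // ∀ m, projEl (x (m + 1)) = x m}

/-- Canonical inclusion `S_N(G) → S_n(G)`, `N ≤ n`. -/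
def incl {G : Type*} [Group G] {N n : ℕ} (h : N ≤ n) (x : El G N) : El G n :=
  (fun i => if hi : (i : ℕ) < N then x.1 ⟨i, hi⟩ else 1,
    x.2.viaFintypeEmbedding (Fin.castLEOrderEmb h).toEmbedding)

/-- Level-`n` right action of a pair `W = (w₁, w₂) ∈ S_N(G) × S_N(G)` on `y ∈ S_n(G)`:
`y · W = w₂⁻¹ y w₁`. -/
def act {G : Type*} [Group G] {N n : ℕ} (h : N ≤ n) (y : El G n) (W : El G N × El G N) :
    El G n :=
  wmul (wmul (winv (incl h W.2)) y) (incl h W.1)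

-- ### Group structure lemmas

theorem wmul_assoc {G : Type*} [Group G] {m : ℕ} (x y z : El G m) :
    wmul (wmul x y) z = wmul x (wmul y z) := by
  unfold wmul
  refine Prod.ext ?_ (mul_assoc _ _ _)
  funext i
  simp [mul_assoc, Equiv.Perm.mul_apply]

theorem winv_wmul {G : Type*} [Group G] {m : ℕ} (x y : El G m) :
    winv (wmul x y) = wmul (winv y) (winv x) := by
  unfold wmul winv
  refine Prod.ext ?_ (mul_inv_rev _ _)
  funext i
  simp [Equiv.Perm.mul_apply, mul_inv_rev]

-- ### projPerm basics

theorem projPerm_castSucc_of_ne {n : ℕ} (s : Equiv.Perm (Fin (n + 1))) (m : Fin n)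
    (h : s (Fin.castSucc m) ≠ Fin.last n) :
    Fin.castSucc (projPerm s m) = s (Fin.castSucc m) := by
  obtain ⟨j, hj⟩ := Fin.eq_castSucc_of_ne_last h
  have he : (finSuccEquivLast.permCongr s) (some m) = some j := by
    simp [Equiv.permCongr_apply, ← hj, finSuccEquivLast_castSucc]
  have := Equiv.removeNone_some (finSuccEquivLast.permCongr s) ⟨j, he⟩
  rw [he] at this
  rw [projPerm]
  rw [Option.some_inj.mp this, hj]

theorem projPerm_castSucc_of_eq {n : ℕ} (s : Equiv.Perm (Fin (n + 1))) (m : Fin n)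
    (h : s (Fin.castSucc m) = Fin.last n) :
    Fin.castSucc (projPerm s m) = s (Fin.last n) := by
  have hlast : s (Fin.last n) ≠ Fin.last n := by
    intro hc
    have := s.injective (hc.trans h.symm)
    exact (Fin.castSucc_lt_last m).ne this.symm
  obtain ⟨j, hj⟩ := Fin.eq_castSucc_of_ne_last hlast
  have he : (finSuccEquivLast.permCongr s) (some m) = none := by
    simp [Equiv.permCongr_apply, h, finSuccEquivLast_last]
  have hnone : (finSuccEquivLast.permCongr s) none = some j := by
    simp [Equiv.permCongr_apply, ← hj, finSuccEquivLast_castSucc]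
  have := Equiv.removeNone_none (finSuccEquivLast.permCongr s) he
  rw [hnone] at this
  rw [projPerm, Option.some_inj.mp this, hj]


-- ### SameCycle correspondence

theorem permPow_succ {α : Type*} (s : Equiv.Perm α) (k : ℕ) (x : α) :
    (s ^ (k + 1)) x = s ((s ^ k) x) := by
  rw [pow_succ', Equiv.Perm.mul_apply]

theorem sameCycle_step {n : ℕ} (s : Equiv.Perm (Fin (n + 1))) (m : Fin n) :
    s.SameCycle (Fin.castSucc m) (Fin.castSucc (projPerm s m)) := by
  by_cases h : s (Fin.castSucc m) = Fin.last n
  · rw [projPerm_castSucc_of_eq s m h, ← h]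
    exact ((Equiv.Perm.SameCycle.refl s _).apply_right).apply_right
  · rw [projPerm_castSucc_of_ne s m h]
    exact (Equiv.Perm.SameCycle.refl s _).apply_right

theorem sameCycle_pow_proj {n : ℕ} (s : Equiv.Perm (Fin (n + 1))) (i : Fin n) (k : ℕ) :
    s.SameCycle (Fin.castSucc i) (Fin.castSucc ((projPerm s ^ k) i)) := by
  induction k with
  | zero => exact Equiv.Perm.SameCycle.refl s _
  | succ k IH =>
    rw [permPow_succ]
    exact IH.trans (sameCycle_step s _)

theorem proj_sameCycle_of {n : ℕ} (s : Equiv.Perm (Fin (n + 1))) (i : Fin n) :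
    ∀ k : ℕ, ∀ j : Fin n, (s ^ k) (Fin.castSucc i) = Fin.castSucc j →
      (projPerm s).SameCycle i j := by
  intro k
  induction k using Nat.strong_induction_on with
  | _ k IH =>
  intro j hk
  match k, hk with
  | 0, hk =>
    simp only [pow_zero, Equiv.Perm.one_apply] at hk
    exact (Fin.castSucc_injective n hk).sameCycle _
  | (k' + 1), hk =>
    have hk' : s ((s ^ k') (Fin.castSucc i)) = Fin.castSucc j := by
      rw [← permPow_succ, hk]
    by_cases hx : (s ^ k') (Fin.castSucc i) = Fin.last n
    · have hk0 : k' ≠ 0 := by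
        intro h0
        rw [h0] at hx
        simp only [pow_zero, Equiv.Perm.one_apply] at hx
        exact (Fin.castSucc_lt_last i).ne hx
      obtain ⟨k'', rfl⟩ := Nat.exists_eq_succ_of_ne_zero hk0
      have hy : (s ^ k'') (Fin.castSucc i) ≠ Fin.last n := by
        intro hy
        have h1 : s (Fin.last n) = Fin.last n := by
          conv_lhs => rw [← hy]
          rw [← permPow_succ, hx]
        have h2 : s (Fin.last n) = Fin.castSucc j := by rw [← hx]; exact hk'
        rw [h1] at h2
        exact (Fin.castSucc_lt_last j).ne h2.symm
      obtain ⟨m, hm⟩ := Fin.eq_castSucc_of_ne_last hy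
      have hIH := IH k'' (by omega) m hm.symm
      have hsm : s (Fin.castSucc m) = Fin.last n := by
        rw [hm, ← permPow_succ, hx]
      have hlast : s (Fin.last n) = Fin.castSucc j := by rw [← hx]; exact hk'
      have ht : projPerm s m = j := by
        have := projPerm_castSucc_of_eq s m hsm
        rw [hlast] at this
        exact Fin.castSucc_injective n this
      exact hIH.trans ⟨1, by simpa using ht⟩
    · obtain ⟨m, hm⟩ := Fin.eq_castSucc_of_ne_last hx
      have hIH := IH k' (by omega) m hm.symm
      have hsm : s (Fin.castSucc m) = Fin.castSucc j := by rw [hm]; exact hk'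
      have ht : projPerm s m = j := by
        have := projPerm_castSucc_of_ne s m (by rw [hsm]; exact (Fin.castSucc_lt_last j).ne)
        rw [hsm] at this
        exact Fin.castSucc_injective n this
      exact hIH.trans ⟨1, by simpa using ht⟩

theorem sameCycle_proj_iff {n : ℕ} (s : Equiv.Perm (Fin (n + 1))) (i j : Fin n) :
    (projPerm s).SameCycle i j ↔ s.SameCycle (Fin.castSucc i) (Fin.castSucc j) := by
  constructor
  · intro h
    obtain ⟨k, -, hk⟩ := h.exists_pow_eq'
    rw [← hk]
    exact sameCycle_pow_proj s i k
  · intro h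
    obtain ⟨k, -, hk⟩ := h.exists_pow_eq'
    exact proj_sameCycle_of s i k j hk

-- ### cycleReps correspondence

theorem mem_cycleReps_iff {n : ℕ} (s : Equiv.Perm (Fin n)) (i : Fin n) :
    i ∈ cycleReps s ↔ ∀ j, s.SameCycle i j → i ≤ j := by
  simp [cycleReps]

theorem last_mem_cycleReps_iff {n : ℕ} (s : Equiv.Perm (Fin (n + 1))) :
    Fin.last n ∈ cycleReps s ↔ s (Fin.last n) = Fin.last n := by
  rw [mem_cycleReps_iff]
  constructor
  · intro h
    exact le_antisymm (Fin.le_last _) (h (s (Fin.last n)) ⟨1, by simp⟩)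
  · intro hfix j hj
    obtain ⟨k, hk⟩ := hj
    rw [Equiv.Perm.zpow_apply_eq_self_of_apply_eq_self hfix] at hk
    rw [← hk]

theorem castSucc_mem_cycleReps_iff {n : ℕ} (s : Equiv.Perm (Fin (n + 1))) (i : Fin n) :
    Fin.castSucc i ∈ cycleReps s ↔ i ∈ cycleReps (projPerm s) := by
  rw [mem_cycleReps_iff, mem_cycleReps_iff]
  constructor
  · intro h j hj
    have := h (Fin.castSucc j) ((sameCycle_proj_iff s i j).mp hj)
    exact Fin.castSucc_le_castSucc_iff.mp this
  · intro h j hj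
    by_cases hjl : j = Fin.last n
    · rw [hjl]; exact Fin.le_last _
    · obtain ⟨m, rfl⟩ := Fin.eq_castSucc_of_ne_last hjl
      exact Fin.castSucc_le_castSucc_iff.mpr (h m ((sameCycle_proj_iff s i m).mpr hj))

-- ### minimal period helpers

theorem perm_isPeriodicPt_orderOf {α : Type*} [Fintype α] [DecidableEq α] (s : Equiv.Perm α)
    (x : α) : Function.IsPeriodicPt (⇑s) (orderOf s) x := by
  simp [Function.IsPeriodicPt, Function.IsFixedPt, Equiv.Perm.iterate_eq_pow,
    pow_orderOf_eq_one]

theorem perm_minPeriod_pos {α : Type*} [Fintype α] [DecidableEq α] (s : Equiv.Perm α) (x : α) :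
    0 < Function.minimalPeriod (⇑s) x :=
  (perm_isPeriodicPt_orderOf s x).minimalPeriod_pos (orderOf_pos s)

theorem perm_pow_minPeriod_apply {α : Type*} (s : Equiv.Perm α) (x : α) :
    (s ^ (Function.minimalPeriod (⇑s) x)) x = x := by
  rw [← Equiv.Perm.iterate_eq_pow]
  exact Function.iterate_minimalPeriod

theorem perm_pow_inj_of_lt {α : Type*} (s : Equiv.Perm α) (x : α) {k l : ℕ}
    (hk : k < Function.minimalPeriod (⇑s) x) (hl : l < Function.minimalPeriod (⇑s) x)
    (h : (s ^ k) x = (s ^ l) x) : k = l := by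
  have := Function.iterate_injOn_Iio_minimalPeriod (f := ⇑s) (x := x)
  exact this (Set.mem_Iio.mpr hk) (Set.mem_Iio.mpr hl)
    (by simpa [Equiv.Perm.iterate_eq_pow] using h)

theorem perm_pow_mod_minPeriod {α : Type*} (s : Equiv.Perm α) (x : α) (k : ℕ) :
    (s ^ (k % Function.minimalPeriod (⇑s) x)) x = (s ^ k) x := by
  rw [← Equiv.Perm.iterate_eq_pow, ← Equiv.Perm.iterate_eq_pow]
  exact Function.iterate_mod_minimalPeriod_eq

-- ### list product helpers

theorem revprod_range_succ {G : Type*} [Monoid G] (A : ℕ → G) (m : ℕ) :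
    (((List.range (m + 1)).map A).reverse).prod = A m * (((List.range m).map A).reverse).prod := by
  rw [List.range_succ, List.map_append, List.reverse_append]
  simp

theorem prod_merge {G : Type*} [Monoid G] (A : ℕ → G) (a b : ℕ) :
    (((List.range (a + b + 2)).map A).reverse).prod =
      (((List.range (a + b + 1)).map
        (fun k => if k < a then A k else if k = a then A (a + 1) * A a else A (k + 1))).reverse).prod := by
  induction b with
  | zero =>
    have e1 : (((List.range (a + 0 + 2)).map A).reverse).prod
        = A (a + 1) * (A a * (((List.range a).map A).reverse).prod) := by
      rw [show a + 0 + 2 = (a + 1) + 1 by ring, revprod_range_succ A (a+1), revprod_range_succ A a]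
    rw [e1, show a + 0 + 1 = a + 1 by ring,
      revprod_range_succ (fun k => if k < a then A k else if k = a then A (a + 1) * A a else A (k + 1)) a]
    have hmap : (List.range a).map
        (fun k => if k < a then A k else if k = a then A (a + 1) * A a else A (k + 1)) =
        (List.range a).map A := by
      apply List.map_congr_left
      intro k hk
      rw [List.mem_range] at hk
      simp [hk]
    rw [hmap]
    simp [mul_assoc]
  | succ b IH =>
    have e1 : (((List.range (a + (b + 1) + 2)).map A).reverse).prod
        = A (a + b + 2) * (((List.range (a + b + 2)).map A).reverse).prod := by
      rw [show a + (b + 1) + 2 = (a + b + 2) + 1 by ring, revprod_range_succ]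
    set F := fun k => if k < a then A k else if k = a then A (a + 1) * A a else A (k + 1) with hF
    have e2 : (((List.range (a + (b + 1) + 1)).map F).reverse).prod
        = F (a + b + 1) * (((List.range (a + b + 1)).map F).reverse).prod := by
      rw [show a + (b + 1) + 1 = (a + b + 1) + 1 by ring, revprod_range_succ]
    have h1 : ¬ (a + b + 1 < a) := by omega
    have h2 : ¬ (a + b + 1 = a) := by omega
    have h3 : F (a + b + 1) = A (a + b + 2) := by
      simp only [hF]
      rw [if_neg h1, if_neg h2]
    rw [e1, e2, IH, h3]

theorem prod_first {G : Type*} [Monoid G] (A : ℕ → G) (X : G) (a : ℕ) :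
    (((List.range (a + 1)).map (fun k => if k = 0 then A 0 * X else A k)).reverse).prod =
      (((List.range (a + 1)).map A).reverse).prod * X := by
  induction a with
  | zero => simp [List.range_succ]
  | succ a IH =>
    set F := fun k => if k = 0 then A 0 * X else A k with hF
    rw [revprod_range_succ F (a + 1), revprod_range_succ A (a + 1), IH]
    have : ¬ (a + 1 = 0) := by omega
    simp only [hF, this, if_false]
    rw [mul_assoc]

theorem mk_mul_comm {G : Type*} [Group G] (x y : G) :
    ConjClasses.mk (x * y) = ConjClasses.mk (y * x) := by
  rw [ConjClasses.mk_eq_mk_iff_isConj, isConj_iff]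
  exact ⟨y, by group⟩

theorem perm_isPeriodicPt_iff {α : Type*} (s : Equiv.Perm α) (x : α) (k : ℕ) :
    Function.IsPeriodicPt (⇑s) k x ↔ (s ^ k) x = x := by
  simp [Function.IsPeriodicPt, Function.IsFixedPt, Equiv.Perm.iterate_eq_pow]

theorem mk_cycleProd_proj {G : Type*} [Group G] {n : ℕ} (s : Equiv.Perm (Fin (n + 1)))
    (g : Fin (n + 1) → G) (i : Fin n) :
    ConjClasses.mk (cycleProd (projPerm s) (projG g s) i)
      = ConjClasses.mk (cycleProd s g (Fin.castSucc i)) := by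
  set t := projPerm s with ht
  set p := Function.minimalPeriod (⇑s) (Fin.castSucc i) with hp
  by_cases hB : s.SameCycle (Fin.castSucc i) (Fin.last n)
  · -- case B : last is on the cycle of castSucc i
    have hp0 : 0 < p := perm_minPeriod_pos s _
    obtain ⟨k0, -, hk0⟩ := hB.exists_pow_eq'
    have ha : (s ^ (k0 % p)) (Fin.castSucc i) = Fin.last n := by
      rw [hp, perm_pow_mod_minPeriod, hk0]
    set a := k0 % p with ha_def
    have haltp : a < p := Nat.mod_lt _ hp0
    have ha0 : 0 < a := by
      rcases Nat.eq_zero_or_pos a with h | h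
      · exfalso
        rw [h, pow_zero, Equiv.Perm.one_apply] at ha
        exact (Fin.castSucc_lt_last i).ne ha
      · exact h
    have huniq : ∀ k, k < p → (s ^ k) (Fin.castSucc i) = Fin.last n → k = a := by
      intro k hk hlast
      exact perm_pow_inj_of_lt s _ (hp ▸ hk) (hp ▸ haltp) (by rw [hlast, ha])
    have hp2 : 2 ≤ p := by omega
    have hppow : (s ^ p) (Fin.castSucc i) = Fin.castSucc i := by
      rw [hp]; exact perm_pow_minPeriod_apply s _
    -- B2 : trajectory description
    have hB2 : ∀ k, k + 1 < p → Fin.castSucc ((t ^ k) i)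
        = (s ^ (if k < a then k else k + 1)) (Fin.castSucc i) := by
      intro k
      induction k with
      | zero => intro _; simp [ha0]
      | succ k IH =>
        intro hk1
        have hIH := IH (by omega)
        by_cases hcmp : k + 1 < a
        · have hkk : k < a := by omega
          rw [if_pos hkk] at hIH
          have hne : s ((s ^ k) (Fin.castSucc i)) ≠ Fin.last n := by
            rw [← permPow_succ]
            intro hc
            have := huniq (k + 1) (by omega) hc
            omega
          rw [if_pos hcmp, permPow_succ, projPerm_castSucc_of_ne s _ (by rw [hIH]; exact hne),
            hIH, ← permPow_succ]
        · by_cases heqa : k + 1 = a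
          · have hkk : k < a := by omega
            rw [if_pos hkk] at hIH
            have hsl : s ((s ^ k) (Fin.castSucc i)) = Fin.last n := by
              rw [← permPow_succ, heqa, ha]
            rw [if_neg hcmp, permPow_succ, projPerm_castSucc_of_eq s _ (by rw [hIH]; exact hsl),
              ← ha, ← permPow_succ, heqa]
          · have hkk : ¬ (k < a) := by omega
            rw [if_neg hkk] at hIH
            have hne : s ((s ^ (k + 1)) (Fin.castSucc i)) ≠ Fin.last n := by
              rw [← permPow_succ]
              intro hc
              rcases Nat.lt_or_ge (k + 2) p with h | h
              · have := huniq (k + 2) h hc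
                omega
              · have hkp : k + 2 = p := by omega
                rw [hkp, hppow] at hc
                exact (Fin.castSucc_lt_last i).ne hc
            rw [if_neg hcmp, permPow_succ, projPerm_castSucc_of_ne s _ (by rw [hIH]; exact hne),
              hIH, ← permPow_succ]
    -- B3 : minimal period drops by one
    have hper : (t ^ (p - 1)) i = i := by
      have h1 : p - 1 = (p - 2) + 1 := by omega
      have hIH := hB2 (p - 2) (by omega)
      apply Fin.castSucc_injective n
      rw [h1, permPow_succ]
      by_cases hcase : p - 2 < a
      · rw [if_pos hcase] at hIH
        have hsl : s (Fin.castSucc ((t ^ (p - 2)) i)) = Fin.last n := by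
          have haa : p - 2 + 1 = a := by omega
          rw [hIH, ← permPow_succ, haa, ha]
        rw [projPerm_castSucc_of_eq s _ hsl, ← ha, ← permPow_succ, show a + 1 = p by omega, hppow]
      · rw [if_neg hcase] at hIH
        have hne : s (Fin.castSucc ((t ^ (p - 2)) i)) ≠ Fin.last n := by
          rw [hIH, ← permPow_succ, show p - 2 + 1 + 1 = p by omega, hppow]
          exact (Fin.castSucc_lt_last i).ne
        rw [projPerm_castSucc_of_ne s _ hne, hIH, ← permPow_succ,
          show p - 2 + 1 + 1 = p by omega, hppow]
    have hB3 : Function.minimalPeriod (⇑t) i = p - 1 := by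
      have hperiodic : Function.IsPeriodicPt (⇑t) (p - 1) i := (perm_isPeriodicPt_iff t i _).mpr hper
      have hle : Function.minimalPeriod (⇑t) i ≤ p - 1 := hperiodic.minimalPeriod_le (by omega)
      rcases Nat.lt_or_ge (Function.minimalPeriod (⇑t) i) (p - 1) with hlt | hge
      · exfalso
        set q := Function.minimalPeriod (⇑t) i with hq
        have hq0 : 0 < q := perm_minPeriod_pos t i
        have hqper : (t ^ q) i = i := by rw [hq]; exact perm_pow_minPeriod_apply t i
        have := hB2 q (by omega)
        rw [hqper] at this
        have h0 : (s ^ (if q < a then q else q + 1)) (Fin.castSucc i)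
            = (s ^ 0) (Fin.castSucc i) := by
          rw [pow_zero, Equiv.Perm.one_apply, ← this]
        have he0 := perm_pow_inj_of_lt s (Fin.castSucc i)
          (by rw [← hp]; split <;> omega) (by rw [← hp]; omega) h0
        split at he0 <;> omega
      · omega
    -- B4/B5 : products
    set A : ℕ → G := fun k => g ((s ^ k) (Fin.castSucc i)) with hA
    have hglast : g (Fin.last n) = A a := by rw [hA]; simp only [ha]
    by_cases hap : a + 1 < p
    · -- generic position of last in the cycle
      have hFk : ∀ k, k < p - 1 → projG g s ((t ^ k) i)
          = (if k < a then A k else if k = a then A (a + 1) * A a else A (k + 1)) := by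
        intro k hk
        have hcs := hB2 k (by omega)
        by_cases hspec : Fin.castSucc ((t ^ k) i) = s (Fin.last n)
        · have h1 : (s ^ (if k < a then k else k + 1)) (Fin.castSucc i)
              = (s ^ (a + 1)) (Fin.castSucc i) := by
            rw [← hcs, hspec, ← ha, ← permPow_succ]
          have he := perm_pow_inj_of_lt s (Fin.castSucc i)
            (by rw [← hp]; split <;> omega) (by rw [← hp]; omega) h1
          have hk_eq : k = a := by split at he <;> omega
          rw [hk_eq] at hspec hcs ⊢
          rw [if_neg (lt_irrefl a), if_pos rfl]
          rw [if_neg (lt_irrefl a)] at hcs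
          simp only [projG]
          rw [if_pos hspec, hcs, hglast]
        · have hk_ne : k ≠ a := by
            intro hcon
            apply hspec
            rw [hcs, hcon, if_neg (lt_irrefl a), ← ha, ← permPow_succ]
          simp only [projG]
          rw [if_neg hspec, hcs]
          by_cases hka : k < a
          · rw [if_pos hka, if_pos hka]
          · rw [if_neg hka, if_neg hka, if_neg hk_ne]
      simp only [cycleProd]
      rw [hB3, ← hp]
      have hmap : (List.range (p - 1)).map (fun k => projG g s ((t ^ k) i))
          = (List.range (p - 1)).map
            (fun k => if k < a then A k else if k = a then A (a + 1) * A a else A (k + 1)) := by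
        apply List.map_congr_left
        intro k hk
        exact hFk k (List.mem_range.mp hk)
      rw [hmap]
      have hb : p = a + (p - a - 2) + 2 := by omega
      have hb1 : p - 1 = a + (p - a - 2) + 1 := by omega
      rw [hb1, show (List.range p).map (fun k => g ((s ^ k) (Fin.castSucc i))) = (List.range (a + (p - a - 2) + 2)).map A by rw [← hb, hA]]
      rw [← prod_merge A a (p - a - 2)]
    · -- last is sent back to castSucc i : a + 1 = p
      have hap' : a + 1 = p := by omega
      have hFk : ∀ k, k < p - 1 → projG g s ((t ^ k) i)
          = (if k = 0 then A 0 * A a else A k) := by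
        intro k hk
        have hcs := hB2 k (by omega)
        have hka : k < a := by omega
        rw [if_pos hka] at hcs
        have hslast : s (Fin.last n) = Fin.castSucc i := by
          rw [← ha, ← permPow_succ, hap', hppow]
        by_cases hk0 : k = 0
        · subst hk0
          have hspec : Fin.castSucc ((t ^ 0) i) = s (Fin.last n) := by
            rw [hcs, pow_zero, Equiv.Perm.one_apply, hslast]
          simp only [projG]
          rw [if_pos hspec, hglast, hcs]
          simp [hA]
        · have hspec : Fin.castSucc ((t ^ k) i) ≠ s (Fin.last n) := by
            rw [hcs, hslast]
            intro hcon
            have : (s ^ k) (Fin.castSucc i) = (s ^ 0) (Fin.castSucc i) := by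
              rw [hcon, pow_zero, Equiv.Perm.one_apply]
            have := perm_pow_inj_of_lt s (Fin.castSucc i) (by rw [← hp]; omega)
              (by rw [← hp]; omega) this
            omega
          simp only [projG]
          rw [if_neg hspec, hcs, if_neg hk0]
      simp only [cycleProd]
      rw [hB3, ← hp]
      have hmap : (List.range (p - 1)).map (fun k => projG g s ((t ^ k) i))
          = (List.range (p - 1)).map (fun k => if k = 0 then A 0 * A a else A k) := by
        apply List.map_congr_left
        intro k hk
        exact hFk k (List.mem_range.mp hk)
      rw [hmap]
      have h1 : p - 1 = (a - 1) + 1 := by omega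
      have h2 : p = ((a - 1) + 1) + 1 := by omega
      rw [h1, prod_first A (A a) (a - 1),
        show (List.range p).map (fun k => g ((s ^ k) (Fin.castSucc i))) = (List.range (((a - 1) + 1) + 1)).map A by rw [← h2, hA]]
      rw [revprod_range_succ A ((a - 1) + 1), show (a - 1) + 1 = a by omega]
      exact mk_mul_comm _ _
  · -- case A : last not on the cycle
    have hA1 : ∀ k, Fin.castSucc ((t ^ k) i) = (s ^ k) (Fin.castSucc i) := by
      intro k
      induction k with
      | zero => simp
      | succ k IH =>
        have hne : s ((s ^ k) (Fin.castSucc i)) ≠ Fin.last n := by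
          intro hc
          apply hB
          rw [← permPow_succ] at hc
          rw [← hc]
          exact Equiv.Perm.sameCycle_pow_right.mpr (Equiv.Perm.SameCycle.refl s _)
        rw [permPow_succ, projPerm_castSucc_of_ne s _ (by rw [IH]; exact hne), IH, ← permPow_succ]
    have hA2 : Function.minimalPeriod (⇑t) i = p := by
      rw [hp, Function.minimalPeriod_eq_minimalPeriod_iff]
      intro m
      rw [perm_isPeriodicPt_iff, perm_isPeriodicPt_iff]
      constructor
      · intro hm
        rw [← hA1, hm]
      · intro hm
        apply Fin.castSucc_injective n
        rw [hA1, hm]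
    have hA3 : ∀ k, projG g s ((t ^ k) i) = g ((s ^ k) (Fin.castSucc i)) := by
      intro k
      have hne : Fin.castSucc ((t ^ k) i) ≠ s (Fin.last n) := by
        intro hc
        apply hB
        have h1 : s.SameCycle (Fin.castSucc i) (s (Fin.last n)) := by
          rw [← hc]
          exact sameCycle_pow_proj s i k
        exact Equiv.Perm.sameCycle_apply_right.mp h1
      simp only [projG]
      rw [if_neg hne, hA1]
    have heq : cycleProd t (projG g s) i = cycleProd s g (Fin.castSucc i) := by
      simp only [cycleProd]
      rw [hA2, hp]
      congr 1
      congr 1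
      apply List.map_congr_left
      intro k _
      exact hA3 k
    rw [heq]

-- ### projection of the color multiset

theorem cycleReps_val_proj {n : ℕ} (s : Equiv.Perm (Fin (n + 1))) :
    (cycleReps s).val = (cycleReps (projPerm s)).val.map Fin.castSucc
      + (if s (Fin.last n) = Fin.last n then {Fin.last n} else 0) := by
  have hnotmem : Fin.last n ∉ (cycleReps (projPerm s)).map
      ⟨Fin.castSucc, Fin.castSucc_injective n⟩ := by
    simp only [Finset.mem_map, Function.Embedding.coeFn_mk]
    rintro ⟨m, -, hm⟩
    exact (Fin.castSucc_lt_last m).ne hm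
  by_cases hfix : s (Fin.last n) = Fin.last n
  · have hFinset : cycleReps s = insert (Fin.last n)
        ((cycleReps (projPerm s)).map ⟨Fin.castSucc, Fin.castSucc_injective n⟩) := by
      ext x
      by_cases hx : x = Fin.last n
      · subst hx
        simp only [Finset.mem_insert, last_mem_cycleReps_iff, hfix, true_iff, eq_self_iff_true,
          true_or]
      · obtain ⟨m, rfl⟩ := Fin.eq_castSucc_of_ne_last hx
        rw [castSucc_mem_cycleReps_iff]
        simp only [Finset.mem_insert, Finset.mem_map, Function.Embedding.coeFn_mk]
        constructor
        · intro hm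
          exact Or.inr ⟨m, hm, rfl⟩
        · rintro (hcon | ⟨m', hm', heq⟩)
          · exact absurd hcon hx
          · rwa [← Fin.castSucc_injective n heq]
    rw [hFinset, if_pos hfix, Finset.insert_val_of_notMem hnotmem, Finset.map_val]
    rw [← Multiset.singleton_add]
    exact add_comm _ _
  · have hFinset : cycleReps s =
        (cycleReps (projPerm s)).map ⟨Fin.castSucc, Fin.castSucc_injective n⟩ := by
      ext x
      by_cases hx : x = Fin.last n
      · subst hx
        simp only [Finset.mem_map, Function.Embedding.coeFn_mk]
        rw [last_mem_cycleReps_iff]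
        constructor
        · intro hcon; exact absurd hcon hfix
        · rintro ⟨m, -, hm⟩
          exact absurd hm (Fin.castSucc_lt_last m).ne
      · obtain ⟨m, rfl⟩ := Fin.eq_castSucc_of_ne_last hx
        rw [castSucc_mem_cycleReps_iff]
        simp only [Finset.mem_map, Function.Embedding.coeFn_mk]
        constructor
        · intro hm
          exact ⟨m, hm, rfl⟩
        · rintro ⟨m', hm', heq⟩
          rwa [← Fin.castSucc_injective n heq]
    rw [hFinset, if_neg hfix, Finset.map_val, add_zero]
    rfl

theorem cycleProd_fixed {G : Type*} [Group G] {n : ℕ} (s : Equiv.Perm (Fin n)) (g : Fin n → G)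
    (x : Fin n) (hx : s x = x) :
    cycleProd s g x = g x := by
  have h1 : Function.minimalPeriod (⇑s) x = 1 :=
    Function.minimalPeriod_eq_one_iff_isFixedPt.mpr hx
  simp [cycleProd, h1, List.range_succ]

theorem colorMultiset_proj {G : Type*} [Group G] {n : ℕ} (y : El G (n + 1)) :
    ((cycleReps y.2).val.map fun i => ConjClasses.mk (cycleProd y.2 y.1 i))
      = ((cycleReps (projEl y).2).val.map fun i =>
          ConjClasses.mk (cycleProd (projEl y).2 (projEl y).1 i))
        + (if y.2 (Fin.last n) = Fin.last n
            then {ConjClasses.mk (y.1 (Fin.last n))} else 0) := by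
  obtain ⟨g, s⟩ := y
  show ((cycleReps s).val.map fun i => ConjClasses.mk (cycleProd s g i)) = _
  rw [cycleReps_val_proj s, Multiset.map_add, Multiset.map_map]
  congr 1
  · apply Multiset.map_congr rfl
    intro m _
    exact (mk_cycleProd_proj s g m).symm
  · by_cases hfix : s (Fin.last n) = Fin.last n
    · rw [if_pos hfix, if_pos hfix, Multiset.map_singleton, cycleProd_fixed s g _ hfix]
    · rw [if_neg hfix, if_neg hfix, Multiset.map_zero]

theorem countColor_projEl {G : Type*} [Group G] {n : ℕ} (c : ConjClasses G) (y : El G (n + 1)) :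
    countColor c y = countColor c (projEl y)
      + (if y.2 (Fin.last n) = Fin.last n ∧ c = ConjClasses.mk (y.1 (Fin.last n))
          then 1 else 0) := by
  rw [countColor, countColor, colorMultiset_proj, Multiset.count_add]
  congr 1
  by_cases hfix : y.2 (Fin.last n) = Fin.last n
  · rw [if_pos hfix, Multiset.count_singleton]
    by_cases hc : c = ConjClasses.mk (y.1 (Fin.last n))
    · rw [if_pos hc, if_pos ⟨hfix, hc⟩]
    · rw [if_neg hc, if_neg (by tauto)]
  · rw [if_neg hfix, if_neg (by tauto)]
    simp

-- ### incl algebra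

def inclPerm {N n : ℕ} (h : N ≤ n) (s : Equiv.Perm (Fin N)) : Equiv.Perm (Fin n) :=
  s.viaFintypeEmbedding (Fin.castLEOrderEmb h).toEmbedding

theorem inclPerm_castLE {N n : ℕ} (h : N ≤ n) (s : Equiv.Perm (Fin N)) (j : Fin N) :
    inclPerm h s (Fin.castLE h j) = Fin.castLE h (s j) :=
  Equiv.Perm.viaFintypeEmbedding_apply_image s _ j

theorem not_mem_range_castLE {N n : ℕ} (h : N ≤ n) {i : Fin n} (hi : ¬ (i : ℕ) < N) :
    i ∉ Set.range (⇑(Fin.castLEOrderEmb h).toEmbedding) := by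
  rintro ⟨j, rfl⟩
  exact hi j.2

theorem inclPerm_of_ge {N n : ℕ} (h : N ≤ n) (s : Equiv.Perm (Fin N)) {i : Fin n}
    (hi : ¬ (i : ℕ) < N) : inclPerm h s i = i :=
  Equiv.Perm.viaFintypeEmbedding_apply_notMem_range s _ (not_mem_range_castLE h hi)

theorem castLE_mk {N n : ℕ} (h : N ≤ n) (i : Fin n) (hi : (i : ℕ) < N) :
    Fin.castLE h ⟨(i : ℕ), hi⟩ = i := by
  apply Fin.ext
  rfl

theorem inclPerm_mul {N n : ℕ} (h : N ≤ n) (s u : Equiv.Perm (Fin N)) :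
    inclPerm h (s * u) = inclPerm h s * inclPerm h u := by
  apply Equiv.ext
  intro i
  by_cases hi : (i : ℕ) < N
  · rw [← castLE_mk h i hi]
    rw [Equiv.Perm.mul_apply, inclPerm_castLE, inclPerm_castLE, inclPerm_castLE]
    rfl
  · rw [Equiv.Perm.mul_apply, inclPerm_of_ge h _ hi, inclPerm_of_ge h _ hi, inclPerm_of_ge h _ hi]

theorem inclPerm_one {N n : ℕ} (h : N ≤ n) : inclPerm h (1 : Equiv.Perm (Fin N)) = 1 := by
  apply Equiv.ext
  intro i
  by_cases hi : (i : ℕ) < N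
  · rw [← castLE_mk h i hi, inclPerm_castLE]
    rfl
  · rw [inclPerm_of_ge h _ hi]
    rfl

theorem inclPerm_inv {N n : ℕ} (h : N ≤ n) (s : Equiv.Perm (Fin N)) :
    inclPerm h s⁻¹ = (inclPerm h s)⁻¹ := by
  rw [eq_inv_iff_mul_eq_one, ← inclPerm_mul, inv_mul_cancel, inclPerm_one]

theorem incl_snd {G : Type*} [Group G] {N n : ℕ} (h : N ≤ n) (x : El G N) :
    (incl h x).2 = inclPerm h x.2 := rfl

theorem incl_fst_lt {G : Type*} [Group G] {N n : ℕ} (h : N ≤ n) (x : El G N) (i : Fin n)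
    (hi : (i : ℕ) < N) : (incl h x).1 i = x.1 ⟨(i : ℕ), hi⟩ := by
  simp [incl, hi]

theorem incl_fst_ge {G : Type*} [Group G] {N n : ℕ} (h : N ≤ n) (x : El G N) (i : Fin n)
    (hi : ¬ (i : ℕ) < N) : (incl h x).1 i = 1 := by
  simp [incl, hi]

theorem inclPerm_lt {N n : ℕ} (h : N ≤ n) (s : Equiv.Perm (Fin N)) (i : Fin n)
    (hi : (i : ℕ) < N) : inclPerm h s i = Fin.castLE h (s ⟨(i : ℕ), hi⟩) := by
  conv_lhs => rw [← castLE_mk h i hi]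
  exact inclPerm_castLE h s _

theorem incl_wmul {G : Type*} [Group G] {N n : ℕ} (h : N ≤ n) (x y : El G N) :
    incl h (wmul x y) = wmul (incl h x) (incl h y) := by
  apply Prod.ext
  · funext i
    show (incl h (wmul x y)).1 i = (incl h x).1 i * (incl h y).1 ((incl h x).2⁻¹ i)
    rw [incl_snd, ← inclPerm_inv]
    by_cases hi : (i : ℕ) < N
    · rw [incl_fst_lt h _ i hi, inclPerm_lt h _ i hi, incl_fst_lt h x i hi]
      show x.1 ⟨(i : ℕ), hi⟩ * y.1 (x.2⁻¹ ⟨(i : ℕ), hi⟩) = _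
      have h2 : ((Fin.castLE h (x.2⁻¹ ⟨(i : ℕ), hi⟩) : Fin n) : ℕ) < N :=
        (x.2⁻¹ ⟨(i : ℕ), hi⟩).2
      rw [incl_fst_lt h y _ h2]
      have e : (⟨((Fin.castLE h (x.2⁻¹ ⟨(i : ℕ), hi⟩) : Fin n) : ℕ), h2⟩ : Fin N)
          = x.2⁻¹ ⟨(i : ℕ), hi⟩ := Fin.ext rfl
      rw [e]
    · rw [incl_fst_ge h _ i hi, incl_fst_ge h x i hi, inclPerm_of_ge h _ hi,
        incl_fst_ge h y i hi, one_mul]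
  · show inclPerm h (x.2 * y.2) = inclPerm h x.2 * inclPerm h y.2
    exact inclPerm_mul h _ _

theorem incl_winv {G : Type*} [Group G] {N n : ℕ} (h : N ≤ n) (x : El G N) :
    incl h (winv x) = winv (incl h x) := by
  apply Prod.ext
  · funext i
    show (incl h (winv x)).1 i = ((incl h x).1 ((incl h x).2 i))⁻¹
    rw [incl_snd]
    by_cases hi : (i : ℕ) < N
    · rw [incl_fst_lt h _ i hi, inclPerm_lt h _ i hi]
      show (x.1 (x.2 ⟨(i : ℕ), hi⟩))⁻¹ = _
      have h2 : ((Fin.castLE h (x.2 ⟨(i : ℕ), hi⟩) : Fin n) : ℕ) < N := (x.2 ⟨(i : ℕ), hi⟩).2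
      rw [incl_fst_lt h x _ h2]
      have e : (⟨((Fin.castLE h (x.2 ⟨(i : ℕ), hi⟩) : Fin n) : ℕ), h2⟩ : Fin N)
          = x.2 ⟨(i : ℕ), hi⟩ := Fin.ext rfl
      rw [e]
    · rw [incl_fst_ge h _ i hi, inclPerm_of_ge h _ hi, incl_fst_ge h x i hi, inv_one]
  · show inclPerm h x.2⁻¹ = (inclPerm h x.2)⁻¹
    exact inclPerm_inv h x.2

theorem incl_trans {G : Type*} [Group G] {N n m : ℕ} (h1 : N ≤ n) (h2 : n ≤ m) (x : El G N) :
    incl h2 (incl h1 x) = incl (h1.trans h2) x := by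
  apply Prod.ext
  · funext i
    by_cases hi : (i : ℕ) < N
    · have hin : (i : ℕ) < n := lt_of_lt_of_le hi h1
      rw [incl_fst_lt h2 _ i hin, incl_fst_lt (h1.trans h2) x i hi]
      exact incl_fst_lt h1 x _ hi
    · by_cases hin : (i : ℕ) < n
      · rw [incl_fst_lt h2 _ i hin, incl_fst_ge (h1.trans h2) x i hi]
        exact incl_fst_ge h1 x _ hi
      · rw [incl_fst_ge h2 _ i hin, incl_fst_ge (h1.trans h2) x i hi]
  · show inclPerm h2 (inclPerm h1 x.2) = inclPerm (h1.trans h2) x.2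
    apply Equiv.ext
    intro i
    by_cases hi : (i : ℕ) < N
    · have hin : (i : ℕ) < n := lt_of_lt_of_le hi h1
      rw [inclPerm_lt h2 _ i hin, inclPerm_lt h1 x.2 _ hi, inclPerm_lt (h1.trans h2) x.2 i hi]
      apply Fin.ext
      show ((x.2 ⟨((⟨(i : ℕ), hin⟩ : Fin n) : ℕ), hi⟩) : ℕ) = ((x.2 ⟨(i : ℕ), hi⟩) : ℕ)
      rfl
    · by_cases hin : (i : ℕ) < n
      · rw [inclPerm_lt h2 _ i hin, inclPerm_of_ge (h1.trans h2) _ hi]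
        have : inclPerm h1 x.2 ⟨(i : ℕ), hin⟩ = ⟨(i : ℕ), hin⟩ := inclPerm_of_ge h1 _ hi
        rw [this]
        apply Fin.ext
        rfl
      · rw [inclPerm_of_ge h2 _ hin, inclPerm_of_ge (h1.trans h2) _ hi]

-- ### incl at successor level

theorem inclPerm_succ_castSucc {n : ℕ} (s : Equiv.Perm (Fin n)) (j : Fin n) :
    inclPerm (Nat.le_succ n) s (Fin.castSucc j) = Fin.castSucc (s j) := by
  have h1 : Fin.castSucc j = Fin.castLE (Nat.le_succ n) j := Fin.ext rfl
  rw [h1, inclPerm_castLE]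
  exact Fin.ext rfl

theorem inclPerm_succ_last {n : ℕ} (s : Equiv.Perm (Fin n)) :
    inclPerm (Nat.le_succ n) s (Fin.last n) = Fin.last n :=
  inclPerm_of_ge _ _ (by simp)

theorem incl_succ_fst_castSucc {G : Type*} [Group G] {n : ℕ} (a : El G n) (j : Fin n) :
    (incl (Nat.le_succ n) a).1 (Fin.castSucc j) = a.1 j := by
  rw [incl_fst_lt _ _ _ (by simpa using j.2)]
  exact congrArg a.1 (Fin.ext rfl)

theorem incl_succ_fst_last {G : Type*} [Group G] {n : ℕ} (a : El G n) :
    (incl (Nat.le_succ n) a).1 (Fin.last n) = 1 :=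
  incl_fst_ge _ _ _ (by simp)

theorem projPerm_mul_incl {n : ℕ} (α β : Equiv.Perm (Fin n)) (σ : Equiv.Perm (Fin (n + 1))) :
    projPerm ((inclPerm (Nat.le_succ n) α * σ) * inclPerm (Nat.le_succ n) β)
      = (α * projPerm σ) * β := by
  set ρ := (inclPerm (Nat.le_succ n) α * σ) * inclPerm (Nat.le_succ n) β with hρ
  apply Equiv.ext
  intro m
  have hρcs : ρ (Fin.castSucc m) = inclPerm (Nat.le_succ n) α (σ (Fin.castSucc (β m))) := by
    rw [hρ]
    simp only [Equiv.Perm.mul_apply, inclPerm_succ_castSucc]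
  have hρl : ρ (Fin.last n) = inclPerm (Nat.le_succ n) α (σ (Fin.last n)) := by
    rw [hρ]
    simp only [Equiv.Perm.mul_apply, inclPerm_succ_last]
  show projPerm ρ m = α (projPerm σ (β m))
  by_cases hc : σ (Fin.castSucc (β m)) = Fin.last n
  · have h1 : ρ (Fin.castSucc m) = Fin.last n := by rw [hρcs, hc, inclPerm_succ_last]
    have hσl : σ (Fin.last n) ≠ Fin.last n := by
      intro hcon
      exact (Fin.castSucc_lt_last (β m)).ne (σ.injective (hc.trans hcon.symm))
    obtain ⟨r, hr⟩ := Fin.eq_castSucc_of_ne_last hσl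
    have h3 : ρ (Fin.last n) = Fin.castSucc (α r) := by
      rw [hρl, ← hr, inclPerm_succ_castSucc]
    have h4 := projPerm_castSucc_of_eq ρ m h1
    rw [h3] at h4
    have h5 := projPerm_castSucc_of_eq σ (β m) hc
    rw [← hr] at h5
    rw [Fin.castSucc_injective n h5]
    exact Fin.castSucc_injective n h4
  · obtain ⟨r, hr⟩ := Fin.eq_castSucc_of_ne_last hc
    have h1 : ρ (Fin.castSucc m) = Fin.castSucc (α r) := by
      rw [hρcs, ← hr, inclPerm_succ_castSucc]
    have h4 := projPerm_castSucc_of_ne ρ m (by rw [h1]; exact (Fin.castSucc_lt_last _).ne)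
    rw [h1] at h4
    have h5 := projPerm_castSucc_of_ne σ (β m) hc
    rw [← hr] at h5
    rw [Fin.castSucc_injective n h5]
    exact Fin.castSucc_injective n h4

-- ### compatibility of the projection with the two-sided action

theorem Equiv.Perm.apply_inv_self {α : Type*} (f : Equiv.Perm α) (x : α) : f (f⁻¹ x) = x :=
  f.apply_symm_apply x

theorem Equiv.Perm.inv_apply_self {α : Type*} (f : Equiv.Perm α) (x : α) : f⁻¹ (f x) = x :=
  f.symm_apply_apply x

theorem proj_wmul_incl {G : Type*} [Group G] {n : ℕ} (a b : El G n) (y : El G (n + 1)) :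
    projEl (wmul (wmul (incl (Nat.le_succ n) a) y) (incl (Nat.le_succ n) b))
      = wmul (wmul a (projEl y)) b := by
  set ia := incl (Nat.le_succ n) a with hia
  set ib := incl (Nat.le_succ n) b with hib
  set z := wmul (wmul ia y) ib with hz
  have hz2 : z.2 = (inclPerm (Nat.le_succ n) a.2 * y.2) * inclPerm (Nat.le_succ n) b.2 := rfl
  have hperm : projPerm z.2 = (a.2 * projPerm y.2) * b.2 := by
    rw [hz2]; exact projPerm_mul_incl _ _ _
  have hinv_cs : ∀ j : Fin n, ia.2⁻¹ (Fin.castSucc j) = Fin.castSucc (a.2⁻¹ j) := by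
    intro j
    rw [hia, incl_snd, ← inclPerm_inv, inclPerm_succ_castSucc]
  have hinv_l : ia.2⁻¹ (Fin.last n) = Fin.last n := by
    rw [hia, incl_snd, ← inclPerm_inv, inclPerm_succ_last]
  have hz1 : ∀ j, z.1 j = ia.1 j * y.1 (ia.2⁻¹ j) * ib.1 (y.2⁻¹ (ia.2⁻¹ j)) := by
    intro j
    show (wmul ia y).1 j * ib.1 ((wmul ia y).2⁻¹ j) = _
    have h2 : (wmul ia y).2⁻¹ j = y.2⁻¹ (ia.2⁻¹ j) := by
      show (ia.2 * y.2)⁻¹ j = _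
      rw [mul_inv_rev, Equiv.Perm.mul_apply]
    rw [h2]
    rfl
  have hzlast : z.2 (Fin.last n) = inclPerm (Nat.le_succ n) a.2 (y.2 (Fin.last n)) := by
    rw [hz2]
    simp only [Equiv.Perm.mul_apply, inclPerm_succ_last]
  apply Prod.ext
  · funext i
    show projG z.1 z.2 i = (wmul a (projEl y)).1 i * b.1 ((wmul a (projEl y)).2⁻¹ i)
    have hrhs2 : (wmul a (projEl y)).2⁻¹ i = (projPerm y.2)⁻¹ (a.2⁻¹ i) := by
      show (a.2 * projPerm y.2)⁻¹ i = _
      rw [mul_inv_rev, Equiv.Perm.mul_apply]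
    rw [hrhs2]
    show projG z.1 z.2 i = (a.1 i * projG y.1 y.2 (a.2⁻¹ i)) * b.1 ((projPerm y.2)⁻¹ (a.2⁻¹ i))
    have hz1cs : z.1 (Fin.castSucc i)
        = a.1 i * y.1 (Fin.castSucc (a.2⁻¹ i)) * ib.1 (y.2⁻¹ (Fin.castSucc (a.2⁻¹ i))) := by
      rw [hz1, hinv_cs i, hia, incl_succ_fst_castSucc]
    by_cases hy : y.2 (Fin.last n) = Fin.last n
    · have h1 : z.2 (Fin.last n) = Fin.last n := by rw [hzlast, hy, inclPerm_succ_last]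
      have hcond : ¬ (Fin.castSucc i = z.2 (Fin.last n)) := by
        rw [h1]; exact (Fin.castSucc_lt_last i).ne
      have hcondy : ¬ (Fin.castSucc (a.2⁻¹ i) = y.2 (Fin.last n)) := by
        rw [hy]; exact (Fin.castSucc_lt_last _).ne
      simp only [projG]
      rw [if_neg hcond, if_neg hcondy, hz1cs]
      have hne : y.2⁻¹ (Fin.castSucc (a.2⁻¹ i)) ≠ Fin.last n := by
        intro hcon
        have := congrArg y.2 hcon
        rw [Equiv.Perm.apply_inv_self, hy] at this
        exact (Fin.castSucc_lt_last _).ne this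
      obtain ⟨r, hr⟩ := Fin.eq_castSucc_of_ne_last hne
      have hyr : y.2 (Fin.castSucc r) = Fin.castSucc (a.2⁻¹ i) := by
        rw [hr, Equiv.Perm.apply_inv_self]
      have htr : projPerm y.2 r = a.2⁻¹ i := by
        have := projPerm_castSucc_of_ne y.2 r (by rw [hyr]; exact (Fin.castSucc_lt_last _).ne)
        rw [hyr] at this
        exact Fin.castSucc_injective n this
      have hinvt : (projPerm y.2)⁻¹ (a.2⁻¹ i) = r := by
        rw [← htr, Equiv.Perm.inv_apply_self]
      rw [hinvt, ← hr, hib, incl_succ_fst_castSucc]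
    · obtain ⟨m0, hm0⟩ := Fin.eq_castSucc_of_ne_last hy
      have h1 : z.2 (Fin.last n) = Fin.castSucc (a.2 m0) := by
        rw [hzlast, ← hm0, inclPerm_succ_castSucc]
      obtain ⟨m1, hm1⟩ := Fin.eq_castSucc_of_ne_last
        (show y.2⁻¹ (Fin.last n) ≠ Fin.last n by
          intro hcon
          have h := congrArg y.2 hcon
          rw [Equiv.Perm.apply_inv_self] at h
          exact hy h.symm)
      have htm1 : projPerm y.2 m1 = m0 := by
        have hcm1 : y.2 (Fin.castSucc m1) = Fin.last n := by
          rw [hm1, Equiv.Perm.apply_inv_self]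
        have := projPerm_castSucc_of_eq y.2 m1 hcm1
        rw [← hm0] at this
        exact Fin.castSucc_injective n this
      have hinvt0 : (projPerm y.2)⁻¹ m0 = m1 := by
        rw [← htm1, Equiv.Perm.inv_apply_self]
      by_cases hi : i = a.2 m0
      · have hm : a.2⁻¹ i = m0 := by rw [hi, Equiv.Perm.inv_apply_self]
        have hcond : Fin.castSucc i = z.2 (Fin.last n) := by rw [h1, hi]
        have hcondy : Fin.castSucc (a.2⁻¹ i) = y.2 (Fin.last n) := by rw [hm, hm0]
        simp only [projG]
        rw [if_pos hcond, if_pos hcondy, hz1cs]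
        have hz1l : z.1 (Fin.last n) = y.1 (Fin.last n) * b.1 m1 := by
          rw [hz1, hinv_l, hia, incl_succ_fst_last, one_mul, ← hm1, hib,
            incl_succ_fst_castSucc]
        rw [hz1l, hm, hinvt0]
        have hylast : y.2⁻¹ (Fin.castSucc m0) = Fin.last n := by
          rw [hm0, Equiv.Perm.inv_apply_self]
        rw [hylast, hib, incl_succ_fst_last, mul_one]
        rw [mul_assoc, mul_assoc, mul_assoc]
      · have hm : a.2⁻¹ i ≠ m0 := by
          intro hcon
          apply hi
          rw [← hcon, Equiv.Perm.apply_inv_self]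
        have hcond : ¬ (Fin.castSucc i = z.2 (Fin.last n)) := by
          rw [h1]
          intro hcon
          exact hi (Fin.castSucc_injective n hcon)
        have hcondy : ¬ (Fin.castSucc (a.2⁻¹ i) = y.2 (Fin.last n)) := by
          rw [← hm0]
          intro hcon
          exact hm (Fin.castSucc_injective n hcon)
        simp only [projG]
        rw [if_neg hcond, if_neg hcondy, hz1cs]
        have hne : y.2⁻¹ (Fin.castSucc (a.2⁻¹ i)) ≠ Fin.last n := by
          intro hcon
          have := congrArg y.2 hcon
          rw [Equiv.Perm.apply_inv_self] at this
          exact hcondy this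
        obtain ⟨r, hr⟩ := Fin.eq_castSucc_of_ne_last hne
        have hyr : y.2 (Fin.castSucc r) = Fin.castSucc (a.2⁻¹ i) := by
          rw [hr, Equiv.Perm.apply_inv_self]
        have htr : projPerm y.2 r = a.2⁻¹ i := by
          have := projPerm_castSucc_of_ne y.2 r (by rw [hyr]; exact (Fin.castSucc_lt_last _).ne)
          rw [hyr] at this
          exact Fin.castSucc_injective n this
        have hinvt : (projPerm y.2)⁻¹ (a.2⁻¹ i) = r := by
          rw [← htr, Equiv.Perm.inv_apply_self]
        rw [hinvt, ← hr, hib, incl_succ_fst_castSucc]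
  · exact hperm

theorem projEl_act {G : Type*} [Group G] {N n : ℕ} (h : N ≤ n) (y : El G (n + 1))
    (W : El G N × El G N) :
    projEl (act (h.trans (Nat.le_succ n)) y W) = act h (projEl y) W := by
  show projEl (wmul (wmul (winv (incl (h.trans (Nat.le_succ n)) W.2)) y)
      (incl (h.trans (Nat.le_succ n)) W.1)) = _
  rw [← incl_trans h (Nat.le_succ n) W.1, ← incl_trans h (Nat.le_succ n) W.2, ← incl_winv]
  exact proj_wmul_incl (winv (incl h W.2)) (incl h W.1) y

theorem act_last {G : Type*} [Group G] {N n : ℕ} (h : N ≤ n) (y : El G (n + 1))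
    (W : El G N × El G N) :
    ((act (h.trans (Nat.le_succ n)) y W).2 (Fin.last n) = Fin.last n
        ↔ y.2 (Fin.last n) = Fin.last n)
    ∧ (y.2 (Fin.last n) = Fin.last n →
        (act (h.trans (Nat.le_succ n)) y W).1 (Fin.last n) = y.1 (Fin.last n)) := by
  set u := incl h W.2 with hu
  set v := incl h W.1 with hv
  set iu := incl (Nat.le_succ n) u with hiu
  set iv := incl (Nat.le_succ n) v with hiv
  have hact : act (h.trans (Nat.le_succ n)) y W = wmul (wmul (winv iu) y) iv := by
    show wmul (wmul (winv (incl (h.trans (Nat.le_succ n)) W.2)) y)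
        (incl (h.trans (Nat.le_succ n)) W.1) = _
    rw [← incl_trans h (Nat.le_succ n) W.1, ← incl_trans h (Nat.le_succ n) W.2, hiu, hiv, hu, hv]
  have hiu2l : iu.2 (Fin.last n) = Fin.last n := by
    rw [hiu, incl_snd]
    exact inclPerm_succ_last u.2
  have hiv2l : iv.2 (Fin.last n) = Fin.last n := by
    rw [hiv, incl_snd]
    exact inclPerm_succ_last v.2
  have hiu2invl : iu.2⁻¹ (Fin.last n) = Fin.last n := by
    conv_lhs => rw [← hiu2l]
    rw [Equiv.Perm.inv_apply_self]
  have h2 : (act (h.trans (Nat.le_succ n)) y W).2 (Fin.last n) = iu.2⁻¹ (y.2 (Fin.last n)) := by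
    rw [hact]
    show iu.2⁻¹ (y.2 (iv.2 (Fin.last n))) = _
    rw [hiv2l]
  constructor
  · rw [h2]
    constructor
    · intro hfa
      have := congrArg iu.2 hfa
      rw [Equiv.Perm.apply_inv_self, hiu2l] at this
      exact this
    · intro hf
      rw [hf, hiu2invl]
  · intro hfix
    have hyinv : y.2⁻¹ (Fin.last n) = Fin.last n := by
      conv_lhs => rw [← hfix]
      rw [Equiv.Perm.inv_apply_self]
    rw [hact]
    show (wmul (winv iu) y).1 (Fin.last n) * iv.1 ((wmul (winv iu) y).2⁻¹ (Fin.last n))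
        = y.1 (Fin.last n)
    have hp2 : (wmul (winv iu) y).2⁻¹ (Fin.last n) = Fin.last n := by
      show (iu.2⁻¹ * y.2)⁻¹ (Fin.last n) = _
      rw [mul_inv_rev, inv_inv, Equiv.Perm.mul_apply, hiu2l, hyinv]
    rw [hp2]
    show ((iu.1 (iu.2 (Fin.last n)))⁻¹ * y.1 ((iu.2⁻¹)⁻¹ (Fin.last n))) * iv.1 (Fin.last n) = _
    rw [inv_inv, hiu2l, hiu, hiv, incl_succ_fst_last, incl_succ_fst_last, inv_one, one_mul,
      mul_one]

theorem countColor_act_proj {G : Type*} [Group G] {N n : ℕ} (c : ConjClasses G) (h : N ≤ n)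
    (y : El G (n + 1)) (W : El G N × El G N) :
    (countColor c (act (h.trans (Nat.le_succ n)) y W) : ℤ) - countColor c y
      = (countColor c (act h (projEl y) W) : ℤ) - countColor c (projEl y) := by
  have hind : (if (act (h.trans (Nat.le_succ n)) y W).2 (Fin.last n) = Fin.last n
        ∧ c = ConjClasses.mk ((act (h.trans (Nat.le_succ n)) y W).1 (Fin.last n)) then 1 else 0)
      = (if y.2 (Fin.last n) = Fin.last n ∧ c = ConjClasses.mk (y.1 (Fin.last n))
          then 1 else 0) := by
    obtain ⟨hiff, hval⟩ := act_last h y W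
    by_cases hfix : y.2 (Fin.last n) = Fin.last n
    · rw [hval hfix]
      by_cases hc : c = ConjClasses.mk (y.1 (Fin.last n))
      · rw [if_pos ⟨hiff.mpr hfix, hc⟩, if_pos ⟨hfix, hc⟩]
      · rw [if_neg (by tauto), if_neg (by tauto)]
    · rw [if_neg (by intro hcon; exact hfix (hiff.mp hcon.1)), if_neg (by tauto)]
  rw [countColor_projEl c y, countColor_projEl c (act (h.trans (Nat.le_succ n)) y W),
    projEl_act h y W, hind]
  push_cast
  ring

theorem act_mul {G : Type*} [Group G] {N n : ℕ} (hn : N ≤ n) (y : El G n)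
    (V W : El G N × El G N) :
    act hn y ((wmul V.1 W.1, wmul V.2 W.2) : El G N × El G N) = act hn (act hn y V) W := by
  show wmul (wmul (winv (incl hn (wmul V.2 W.2))) y) (incl hn (wmul V.1 W.1)) = _
  rw [incl_wmul, incl_wmul, winv_wmul]
  show _ = wmul (wmul (winv (incl hn W.2)) (wmul (wmul (winv (incl hn V.2)) y) (incl hn V.1)))
      (incl hn W.1)
  simp only [wmul_assoc]

/-- The fundamental cocycle of the dynamical system `(𝔖_G, S_∞(G) × S_∞(G))`:
for a `G`-virtual permutation `x`, a conjugacy class (color) `c` of `G` and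
`W = (w₁,w₂) ∈ S_N(G) × S_N(G)`, the quantity
`C_c(x,W) = [p_n(xW)](c) − [p_n(x)](c)` is well defined (independent of the level
`n ≥ N`), and satisfies the cocycle identity
`C_c(x, W₂W₁) = C_c(xW₂, W₁) + C_c(x, W₂)`. -/
theorem fundamental_cocycle (G : Type*) [Group G] [TopologicalSpace G]
    [IsTopologicalGroup G] [CompactSpace G]
    (c : ConjClasses G) (x : VirtualPerm G) (N : ℕ) (V W : El G N × El G N) :
    (∀ (n m : ℕ) (hn : N ≤ n) (hm : N ≤ m),
        (countColor c (act hn (x.1 n) W) : ℤ) - countColor c (x.1 n)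
          = (countColor c (act hm (x.1 m) W) : ℤ) - countColor c (x.1 m)) ∧
    (∀ (n : ℕ) (hn : N ≤ n),
        (countColor c (act hn (x.1 n) ((wmul V.1 W.1, wmul V.2 W.2) : El G N × El G N)) : ℤ)
            - countColor c (x.1 n)
          = ((countColor c (act hn (act hn (x.1 n) V) W) : ℤ)
                - countColor c (act hn (x.1 n) V))
            + ((countColor c (act hn (x.1 n) V) : ℤ) - countColor c (x.1 n))) := by
  constructor
  · have key : ∀ (k : ℕ) (hk : N ≤ k),
        (countColor c (act hk (x.1 k) W) : ℤ) - countColor c (x.1 k)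
          = (countColor c (act le_rfl (x.1 N) W) : ℤ) - countColor c (x.1 N) := by
      intro k hk
      induction k, hk using Nat.le_induction with
      | base => rfl
      | succ k hk IH =>
        rw [← IH]
        have h1 := countColor_act_proj c hk (x.1 (k + 1)) W
        rw [x.2 k] at h1
        exact h1
    intro n m hn hm
    rw [key n hn, key m hm]
  · intro n hn
    rw [act_mul hn (x.1 n) V W]
    ring

end
end
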